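/- arXiv:2306.09836 — 5 statements merged into one kernel-verified Lean document; each statement's English description precedes it below -/
import Mathlib

section
/- (Lemmas 1 and 2: strong duality for the discretized inner maximization.) Assume ξ̂_s ∈ Ξ for every s and ε ≥ 0. Then the primal optimal value equals the dual optimal value: sup_{u ∈ U} Σ_{s=1}^N Σ_{ξ∈Ξ} c(ξ)·u(s,ξ) = inf_{(α,β) ∈ D} ( ε·α + Σ_{s=1}^N p̂_s β_s ). -/
lemma aux_affine_nonneg (x a b : ℝ)
    (h : ∀ δ : ℝ, 0 < δ → ∃ α : ℝ, |α - x| ≤ δ ∧ 0 ≤ a + α * b) : 0 ≤ a + x * b := by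
  by_contra hc
  push_neg at hc
  have hb1 : (0:ℝ) < |b| + 1 := by positivity
  have hv : (0:ℝ) < -(a + x * b) := by linarith
  obtain ⟨α, hαx, h0⟩ := h ((-(a + x * b)) / (2 * (|b| + 1))) (div_pos hv (by positivity))
  have h1 : (α - x) * b ≤ |α - x| * |b| := by
    calc (α - x) * b ≤ |(α - x) * b| := le_abs_self _
      _ = |α - x| * |b| := abs_mul _ _
  have h2 : |α - x| * |b| ≤ ((-(a + x * b)) / (2 * (|b| + 1))) * (|b| + 1) := by
    apply mul_le_mul hαx (by linarith [le_refl |b|]) (abs_nonneg b) (le_of_lt (div_pos hv (by positivity)))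
  have h3 : ((-(a + x * b)) / (2 * (|b| + 1))) * (|b| + 1) = -(a + x * b) / 2 := by
    field_simp
  nlinarith [h0, h1, h2]

lemma aux_sum_ite_mul {E : Type*} [DecidableEq E] (Ξ : Finset E) (b : E) (hb : b ∈ Ξ)
    (p : ℝ) (F : E → ℝ) :
    ∑ ξ ∈ Ξ, (if ξ = b then p else 0) * F ξ = p * F b := by
  rw [Finset.sum_eq_single_of_mem b hb]
  · simp
  · intro ξ _ hne; simp [hne]

set_option maxHeartbeats 1000000 in
/-- Lemmas 1 and 2: strong duality for the discretized inner maximization.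
The optimal value of the primal (worst-case expectation over the discretized
Wasserstein ambiguity set) equals the optimal value of the Lagrangian dual. -/
theorem strong_duality_discretized
    {E : Type*} [NormedAddCommGroup E] [NormedSpace ℝ E]
    {N : ℕ} (hN : 1 ≤ N)
    (Ξ : Finset E) (hΞ : Ξ.Nonempty)
    (ξhat : Fin N → E) (hmem : ∀ s, ξhat s ∈ Ξ)
    (phat : Fin N → ℝ) (hp0 : ∀ s, 0 ≤ phat s) (hp1 : ∑ s, phat s = 1)
    (ε : ℝ) (hε : 0 ≤ ε) (c : E → ℝ) :
    sSup { v : ℝ | ∃ u : Fin N → E → ℝ,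
        (∀ s, ∀ ξ ∈ Ξ, 0 ≤ u s ξ) ∧
        (∀ s, ∑ ξ ∈ Ξ, u s ξ = phat s) ∧
        (∑ s, ∑ ξ ∈ Ξ, u s ξ * ‖ξhat s - ξ‖) ≤ ε ∧
        v = ∑ s, ∑ ξ ∈ Ξ, c ξ * u s ξ }
    = sInf { w : ℝ | ∃ α : ℝ, ∃ β : Fin N → ℝ, 0 ≤ α ∧
        (∀ s, ∀ ξ ∈ Ξ, c ξ ≤ α * ‖ξhat s - ξ‖ + β s) ∧
        w = ε * α + ∑ s, phat s * β s } := by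
  classical
  haveI hNE : Nonempty (Fin N) := ⟨⟨0, hN⟩⟩
  set S := { v : ℝ | ∃ u : Fin N → E → ℝ,
        (∀ s, ∀ ξ ∈ Ξ, 0 ≤ u s ξ) ∧
        (∀ s, ∑ ξ ∈ Ξ, u s ξ = phat s) ∧
        (∑ s, ∑ ξ ∈ Ξ, u s ξ * ‖ξhat s - ξ‖) ≤ ε ∧
        v = ∑ s, ∑ ξ ∈ Ξ, c ξ * u s ξ } with hSdef
  set W := { w : ℝ | ∃ α : ℝ, ∃ β : Fin N → ℝ, 0 ≤ α ∧
        (∀ s, ∀ ξ ∈ Ξ, c ξ ≤ α * ‖ξhat s - ξ‖ + β s) ∧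
        w = ε * α + ∑ s, phat s * β s } with hWdef
  -- weak duality
  have weak : ∀ v ∈ S, ∀ w ∈ W, v ≤ w := by
    rintro v ⟨u, hu0, hu1, hu2, rfl⟩ w ⟨α, β, hα, hfeas, rfl⟩
    calc ∑ s, ∑ ξ ∈ Ξ, c ξ * u s ξ
        ≤ ∑ s, ∑ ξ ∈ Ξ, (α * ‖ξhat s - ξ‖ + β s) * u s ξ := by
          apply Finset.sum_le_sum; intro s _
          apply Finset.sum_le_sum; intro ξ hξ
          exact mul_le_mul_of_nonneg_right (hfeas s ξ hξ) (hu0 s ξ hξ)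
      _ = ∑ s, (α * (∑ ξ ∈ Ξ, u s ξ * ‖ξhat s - ξ‖) + phat s * β s) := by
          apply Finset.sum_congr rfl; intro s _
          rw [← hu1 s, Finset.mul_sum, Finset.sum_mul, ← Finset.sum_add_distrib]
          apply Finset.sum_congr rfl; intro ξ _; ring
      _ = α * (∑ s, ∑ ξ ∈ Ξ, u s ξ * ‖ξhat s - ξ‖) + ∑ s, phat s * β s := by
          rw [Finset.sum_add_distrib, ← Finset.mul_sum]
      _ ≤ α * ε + ∑ s, phat s * β s := by
          have := mul_le_mul_of_nonneg_left hu2 hα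
          linarith
      _ = ε * α + ∑ s, phat s * β s := by ring
  -- the dual objective with optimal β for given α
  set g : Fin N → ℝ → ℝ := fun s α => Ξ.sup' hΞ (fun ξ => c ξ - α * ‖ξhat s - ξ‖) with hgdef
  have hg_le : ∀ s α, ∀ ξ ∈ Ξ, c ξ - α * ‖ξhat s - ξ‖ ≤ g s α := by
    intro s α ξ hξ; exact Finset.le_sup' (fun ξ => c ξ - α * ‖ξhat s - ξ‖) hξ
  have hg_ex : ∀ s α, ∃ ξ, ξ ∈ Ξ ∧ g s α = c ξ - α * ‖ξhat s - ξ‖ :=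
    fun s α => Ξ.exists_mem_eq_sup' hΞ _
  set f : ℝ → ℝ := fun α => ε * α + ∑ s, phat s * g s α with hfdef
  -- minimizer of f on [0, ∞)
  obtain ⟨αstar, hα0, hglob⟩ : ∃ αstar : ℝ, 0 ≤ αstar ∧ ∀ α, 0 ≤ α → f αstar ≤ f α := by
    have hprodne : ((Finset.univ : Finset (Fin N)) ×ˢ Ξ).Nonempty :=
      Finset.Nonempty.product Finset.univ_nonempty hΞ
    set A : ℝ := max 0 (((Finset.univ : Finset (Fin N)) ×ˢ Ξ).sup' hprodne
      (fun p => (c p.2 - c (ξhat p.1)) / ‖ξhat p.1 - p.2‖)) with hAdef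
    have hA0 : (0:ℝ) ≤ A := le_max_left _ _
    have hgA : ∀ s : Fin N, ∀ α : ℝ, A ≤ α → g s α = c (ξhat s) := by
      intro s α hAα
      apply le_antisymm
      · apply Finset.sup'_le
        intro ξ hξ
        rcases eq_or_ne ξ (ξhat s) with h | h
        · subst h; simp
        · have hd : 0 < ‖ξhat s - ξ‖ :=
            norm_pos_iff.mpr (sub_ne_zero_of_ne (Ne.symm h))
          have hmem2 : (s, ξ) ∈ ((Finset.univ : Finset (Fin N)) ×ˢ Ξ) :=
            Finset.mem_product.mpr ⟨Finset.mem_univ s, hξ⟩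
          have hle : (c ξ - c (ξhat s)) / ‖ξhat s - ξ‖ ≤ A :=
            le_trans (Finset.le_sup' (fun p => (c p.2 - c (ξhat p.1)) / ‖ξhat p.1 - p.2‖) hmem2)
              (le_max_right _ _)
          have h1 := (div_le_iff₀ hd).mp hle
          nlinarith [mul_le_mul_of_nonneg_right hAα (le_of_lt hd)]
      · have := hg_le s α (ξhat s) (hmem s); simpa using this
    have hfc : Continuous f := by
      rw [hfdef]
      apply Continuous.add (continuous_const.mul continuous_id)
      apply continuous_finset_sum
      intro s _
      rw [hgdef]
      exact continuous_const.mul (Continuous.finset_sup'_apply hΞ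
        (fun ξ _ => continuous_const.sub (continuous_id.mul continuous_const)))
    obtain ⟨αstar, hmem', hmin⟩ := (isCompact_Icc (a := (0:ℝ)) (b := A)).exists_isMinOn
      ⟨0, by simp [hA0]⟩ hfc.continuousOn
    refine ⟨αstar, hmem'.1, ?_⟩
    intro α hα
    rcases le_or_gt α A with h | h
    · exact isMinOn_iff.mp hmin α ⟨hα, h⟩
    · have h1 : f αstar ≤ f A := isMinOn_iff.mp hmin A ⟨hA0, le_rfl⟩
      have h2 : f A ≤ f α := by
        have e1 : ∑ s, phat s * g s A = ∑ s, phat s * c (ξhat s) :=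
          Finset.sum_congr rfl fun s _ => by rw [hgA s A le_rfl]
        have e2 : ∑ s, phat s * g s α = ∑ s, phat s * c (ξhat s) :=
          Finset.sum_congr rfl fun s _ => by rw [hgA s α h.le]
        simp only [hfdef]
        rw [e1, e2]
        nlinarith [mul_le_mul_of_nonneg_left (le_of_lt h) hε]
      linarith
  -- f αstar is a dual value
  have hfW : f αstar ∈ W := by
    refine ⟨αstar, fun s => g s αstar, hα0, ?_, rfl⟩
    intro s ξ hξ
    have := hg_le s αstar ξ hξ
    linarith
  -- rewriting of the weighted sum of g at a point where a tuple is maximal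
  have hsum : ∀ (t : Fin N → E), (∀ s, t s ∈ Ξ) → ∀ α : ℝ,
      (∀ s, ∀ ξ ∈ Ξ, c ξ - α * ‖ξhat s - ξ‖ ≤ c (t s) - α * ‖ξhat s - t s‖) →
      ∑ s, phat s * g s α
        = (∑ s, phat s * c (t s)) - α * ∑ s, phat s * ‖ξhat s - t s‖ := by
    intro t htm α hmax
    have hgt : ∀ s : Fin N, g s α = c (t s) - α * ‖ξhat s - t s‖ := by
      intro s
      exact le_antisymm (Finset.sup'_le _ _ fun ξ hξ => hmax s ξ hξ) (hg_le s α _ (htm s))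
    calc ∑ s, phat s * g s α
        = ∑ s, (phat s * c (t s) - α * (phat s * ‖ξhat s - t s‖)) := by
          apply Finset.sum_congr rfl; intro s _; rw [hgt s]; ring
      _ = _ := by rw [Finset.sum_sub_distrib, ← Finset.mul_sum]
  -- tuple extraction along a sequence approaching αstar
  have tuple_claim : ∀ a : ℕ → ℝ, (∀ n, 0 ≤ a n) →
      (∀ δ : ℝ, 0 < δ → ∃ n₀ : ℕ, ∀ n, n₀ ≤ n → |a n - αstar| ≤ δ) →
      ∃ t : Fin N → E, (∀ s, t s ∈ Ξ) ∧
        (∀ δ : ℝ, 0 < δ → ∃ α : ℝ, 0 ≤ α ∧ |α - αstar| ≤ δ ∧ (∃ n, α = a n) ∧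
          ∀ s, ∀ ξ ∈ Ξ, c ξ - α * ‖ξhat s - ξ‖ ≤ c (t s) - α * ‖ξhat s - t s‖) := by
    intro a ha0 hnear
    have hex : ∀ n : ℕ, ∀ s : Fin N, ∃ ξ, ξ ∈ Ξ ∧ g s (a n) = c ξ - a n * ‖ξhat s - ξ‖ :=
      fun n s => hg_ex s (a n)
    choose T hT1 hT2 using hex
    have hfib := Finite.exists_infinite_fiber (fun n : ℕ => fun s : Fin N =>
      (⟨T n s, hT1 n s⟩ : {x // x ∈ Ξ}))
    obtain ⟨t0, ht0⟩ := hfib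
    refine ⟨fun s => (t0 s : E), fun s => (t0 s).2, ?_⟩
    intro δ hδ
    obtain ⟨n₀, hn₀⟩ := hnear δ hδ
    obtain ⟨n, hn_mem, hn_gt⟩ := (Set.infinite_coe_iff.mp ht0).exists_gt n₀
    have hTn : ∀ s, T n s = (t0 s : E) := by
      intro s
      have : (fun s : Fin N => (⟨T n s, hT1 n s⟩ : {x // x ∈ Ξ})) = t0 := hn_mem
      have := congrFun this s
      exact congrArg Subtype.val this
    refine ⟨a n, ha0 n, hn₀ n hn_gt.le, ⟨n, rfl⟩, ?_⟩
    intro s ξ hξ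
    calc c ξ - a n * ‖ξhat s - ξ‖ ≤ g s (a n) := hg_le s (a n) ξ hξ
      _ = c (T n s) - a n * ‖ξhat s - T n s‖ := hT2 n s
      _ = c (t0 s : E) - a n * ‖ξhat s - (t0 s : E)‖ := by rw [hTn s]
  -- from such a tuple derive the key identity
  have derive : ∀ t : Fin N → E, (∀ s, t s ∈ Ξ) →
      (∀ δ : ℝ, 0 < δ → ∃ α : ℝ, 0 ≤ α ∧ |α - αstar| ≤ δ ∧
          ∀ s, ∀ ξ ∈ Ξ, c ξ - α * ‖ξhat s - ξ‖ ≤ c (t s) - α * ‖ξhat s - t s‖) →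
      ∑ s, phat s * c (t s)
        = (∑ s, phat s * g s αstar) + αstar * ∑ s, phat s * ‖ξhat s - t s‖ := by
    intro t htm hP
    set Vt : ℝ := ∑ s, phat s * c (t s) with hVt
    set Dt : ℝ := ∑ s, phat s * ‖ξhat s - t s‖ with hDt
    set Gt : ℝ := ∑ s, phat s * g s αstar with hGt
    have hge : 0 ≤ (Vt - f αstar) + αstar * (ε - Dt) := by
      apply aux_affine_nonneg αstar (Vt - f αstar) (ε - Dt)
      intro δ hδ
      obtain ⟨α, hα0', hαδ, hmax⟩ := hP δ hδ
      refine ⟨α, hαδ, ?_⟩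
      have h1 : f αstar ≤ f α := hglob α hα0'
      have h2 : f α = ε * α + (Vt - α * Dt) := by
        simp only [hfdef]
        rw [hsum t htm α hmax]
      nlinarith [h1, h2]
    have hle2 : Vt - αstar * Dt ≤ Gt := by
      have : Vt - αstar * Dt = ∑ s, (phat s * c (t s) - αstar * (phat s * ‖ξhat s - t s‖)) := by
        rw [Finset.sum_sub_distrib, ← Finset.mul_sum]
      rw [this, hGt]
      apply Finset.sum_le_sum
      intro s _
      have h3 := hg_le s αstar (t s) (htm s)
      nlinarith [hp0 s]
    have hfst : f αstar = ε * αstar + Gt := rfl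
    nlinarith [hge, hle2, hfst]
  -- construct a primal solution of value f αstar
  have hfS : f αstar ∈ S := by
    -- right-hand tuple
    have hseq_r : ∀ δ : ℝ, 0 < δ → ∃ n₀ : ℕ, ∀ n : ℕ, n₀ ≤ n →
        |(αstar + 1/((n:ℝ)+1)) - αstar| ≤ δ := by
      intro δ hδ
      obtain ⟨n₀, hn₀⟩ := exists_nat_gt (1/δ)
      refine ⟨n₀, fun n hn => ?_⟩
      have h1 : (0:ℝ) < (n:ℝ) + 1 := by positivity
      have h2 : 1/δ < (n:ℝ) + 1 := by
        have : (n₀:ℝ) ≤ (n:ℝ) := Nat.cast_le.mpr hn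
        linarith
      have h4 : 1 < ((n:ℝ)+1) * δ := (div_lt_iff₀ hδ).mp h2
      have h3 : 1/((n:ℝ)+1) ≤ δ := by
        rw [div_le_iff₀ h1]; nlinarith [h4]
      rw [add_sub_cancel_left, abs_of_pos (by positivity)]
      exact h3
    obtain ⟨t, htm, hPt⟩ := tuple_claim (fun n => αstar + 1/((n:ℝ)+1))
      (fun n => by positivity) hseq_r
    have hPt' : ∀ δ : ℝ, 0 < δ → ∃ α : ℝ, 0 ≤ α ∧ |α - αstar| ≤ δ ∧
        ∀ s, ∀ ξ ∈ Ξ, c ξ - α * ‖ξhat s - ξ‖ ≤ c (t s) - α * ‖ξhat s - t s‖ := by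
      intro δ hδ; obtain ⟨α, h1, h2, _, h4⟩ := hPt δ hδ; exact ⟨α, h1, h2, h4⟩
    have eq_t := derive t htm hPt'
    set Vr : ℝ := ∑ s, phat s * c (t s) with hVr
    set Dr : ℝ := ∑ s, phat s * ‖ξhat s - t s‖ with hDrdef
    set G : ℝ := ∑ s, phat s * g s αstar with hGdef
    have hfG : f αstar = ε * αstar + G := rfl
    have hDr : Dr ≤ ε := by
      obtain ⟨α, hα0', hαδ, ⟨n, hα_eq⟩, hmax⟩ := hPt 1 one_pos
      have hgt : αstar < α := by
        rw [hα_eq]; have : (0:ℝ) < 1/((n:ℝ)+1) := by positivity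
        linarith
      have h1 : f αstar ≤ f α := hglob α hα0'
      have h2 : f α = ε * α + (Vr - α * Dr) := by
        simp only [hfdef]
        rw [hsum t htm α hmax]
      nlinarith [eq_t, h1, h2, hfG]
    rcases eq_or_lt_of_le hα0 with hz | hpos
    · -- case αstar = 0 : pure right tuple
      refine ⟨fun s ξ => if ξ = t s then phat s else 0, ?_, ?_, ?_, ?_⟩
      · intro s ξ _
        show (0:ℝ) ≤ if ξ = t s then phat s else 0
        split
        · exact hp0 s
        · exact le_refl 0
      · intro s
        rw [Finset.sum_ite_eq' Ξ (t s) (fun _ => phat s)]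
        simp [htm s]
      · have hr : ∀ s : Fin N, ∑ ξ ∈ Ξ, (if ξ = t s then phat s else 0) * ‖ξhat s - ξ‖
            = phat s * ‖ξhat s - t s‖ :=
          fun s => aux_sum_ite_mul Ξ (t s) (htm s) (phat s) _
        rw [Finset.sum_congr rfl fun s _ => hr s]
        exact hDr
      · have hv : ∀ s : Fin N, ∑ ξ ∈ Ξ, c ξ * (if ξ = t s then phat s else 0)
            = phat s * c (t s) := by
          intro s
          calc ∑ ξ ∈ Ξ, c ξ * (if ξ = t s then phat s else 0)
              = ∑ ξ ∈ Ξ, (if ξ = t s then phat s else 0) * c ξ :=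
                Finset.sum_congr rfl fun ξ _ => mul_comm _ _
            _ = phat s * c (t s) := aux_sum_ite_mul Ξ (t s) (htm s) (phat s) c
        rw [Finset.sum_congr rfl fun s _ => hv s]
        rw [hfG, ← hVr, eq_t, ← hz]
        ring
    · -- case 0 < αstar : also need a left-hand tuple
      have hseq_l : ∀ δ : ℝ, 0 < δ → ∃ n₀ : ℕ, ∀ n : ℕ, n₀ ≤ n →
          |(αstar - αstar/((n:ℝ)+2)) - αstar| ≤ δ := by
        intro δ hδ
        obtain ⟨n₀, hn₀⟩ := exists_nat_gt (αstar/δ)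
        refine ⟨n₀, fun n hn => ?_⟩
        have h1 : (0:ℝ) < (n:ℝ) + 2 := by positivity
        have h2 : αstar/δ < (n:ℝ) + 2 := by
          have : (n₀:ℝ) ≤ (n:ℝ) := Nat.cast_le.mpr hn
          linarith
        have h4 : αstar < ((n:ℝ)+2) * δ := (div_lt_iff₀ hδ).mp h2
        have h3 : αstar/((n:ℝ)+2) ≤ δ := by
          rw [div_le_iff₀ h1]; nlinarith [h4]
        have h5 : αstar - αstar/((n:ℝ)+2) - αstar = -(αstar/((n:ℝ)+2)) := by ring
        rw [h5, abs_neg, abs_of_pos (by positivity)]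
        exact h3
      have hl0' : ∀ n : ℕ, 0 ≤ αstar - αstar/((n:ℝ)+2) := by
        intro n
        have : αstar/((n:ℝ)+2) ≤ αstar := div_le_self (le_of_lt hpos) (by
          have : (0:ℝ) ≤ (n:ℝ) := Nat.cast_nonneg n
          linarith)
        linarith
      obtain ⟨t', htm', hPt2⟩ := tuple_claim (fun n => αstar - αstar/((n:ℝ)+2)) hl0' hseq_l
      have hPt2' : ∀ δ : ℝ, 0 < δ → ∃ α : ℝ, 0 ≤ α ∧ |α - αstar| ≤ δ ∧
          ∀ s, ∀ ξ ∈ Ξ, c ξ - α * ‖ξhat s - ξ‖ ≤ c (t' s) - α * ‖ξhat s - t' s‖ := by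
        intro δ hδ; obtain ⟨α, h1, h2, _, h4⟩ := hPt2 δ hδ; exact ⟨α, h1, h2, h4⟩
      have eq_t' := derive t' htm' hPt2'
      set Vl : ℝ := ∑ s, phat s * c (t' s) with hVl
      set Dl : ℝ := ∑ s, phat s * ‖ξhat s - t' s‖ with hDldef
      have hDl : ε ≤ Dl := by
        obtain ⟨α, hα0', hαδ, ⟨n, hα_eq⟩, hmax⟩ := hPt2 1 one_pos
        have hlt : α < αstar := by
          rw [hα_eq]; have : (0:ℝ) < αstar/((n:ℝ)+2) := by positivity
          linarith
        have h1 : f αstar ≤ f α := hglob α hα0'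
        have h2 : f α = ε * α + (Vl - α * Dl) := by
          simp only [hfdef]
          rw [hsum t' htm' α hmax]
        nlinarith [eq_t', h1, h2, hfG]
      -- the mixing weight
      set l : ℝ := if Dl ≤ Dr then 1 else (Dl - ε)/(Dl - Dr) with hldef
      have hl01 : 0 ≤ l ∧ l ≤ 1 := by
        rw [hldef]; split
        · exact ⟨zero_le_one, le_rfl⟩
        · rename_i hca
          have hlt : Dr < Dl := not_le.mp hca
          constructor
          · apply div_nonneg (by linarith) (by linarith)
          · rw [div_le_one (by linarith)]; linarith
      have hcost : l * Dr + (1 - l) * Dl = ε := by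
        rw [hldef]; split
        · rename_i hca; linarith
        · rename_i hca
          have hlt : Dr < Dl := not_le.mp hca
          have hne : Dl - Dr ≠ 0 := by linarith
          have hq : (Dl - ε)/(Dl - Dr) * (Dl - Dr) = Dl - ε := div_mul_cancel₀ _ hne
          linear_combination -hq
      obtain ⟨hl0, hl1⟩ := hl01
      refine ⟨fun s ξ => l * (if ξ = t s then phat s else 0)
        + (1 - l) * (if ξ = t' s then phat s else 0), ?_, ?_, ?_, ?_⟩
      · intro s ξ _
        apply add_nonneg
        · apply mul_nonneg hl0; split
          · exact hp0 s
          · exact le_refl 0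
        · apply mul_nonneg (by linarith); split
          · exact hp0 s
          · exact le_refl 0
      · intro s
        rw [Finset.sum_add_distrib, ← Finset.mul_sum, ← Finset.mul_sum,
          Finset.sum_ite_eq' Ξ (t s) (fun _ => phat s),
          Finset.sum_ite_eq' Ξ (t' s) (fun _ => phat s)]
        simp only [htm s, htm' s, if_pos]
        ring
      · have hr : ∀ s : Fin N, ∑ ξ ∈ Ξ,
            (l * (if ξ = t s then phat s else 0) + (1 - l) * (if ξ = t' s then phat s else 0))
              * ‖ξhat s - ξ‖
            = l * (phat s * ‖ξhat s - t s‖) + (1 - l) * (phat s * ‖ξhat s - t' s‖) := by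
          intro s
          have e : ∀ ξ : E, (l * (if ξ = t s then phat s else 0)
              + (1 - l) * (if ξ = t' s then phat s else 0)) * ‖ξhat s - ξ‖
              = l * ((if ξ = t s then phat s else 0) * ‖ξhat s - ξ‖)
              + (1 - l) * ((if ξ = t' s then phat s else 0) * ‖ξhat s - ξ‖) := fun ξ => by ring
          rw [Finset.sum_congr rfl fun ξ _ => e ξ, Finset.sum_add_distrib,
            ← Finset.mul_sum, ← Finset.mul_sum,
            aux_sum_ite_mul Ξ (t s) (htm s) (phat s) _,
            aux_sum_ite_mul Ξ (t' s) (htm' s) (phat s) _]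
        rw [Finset.sum_congr rfl fun s _ => hr s, Finset.sum_add_distrib,
          ← Finset.mul_sum, ← Finset.mul_sum, ← hDrdef, ← hDldef, hcost]
      · have hv : ∀ s : Fin N, ∑ ξ ∈ Ξ, c ξ *
            (l * (if ξ = t s then phat s else 0) + (1 - l) * (if ξ = t' s then phat s else 0))
            = l * (phat s * c (t s)) + (1 - l) * (phat s * c (t' s)) := by
          intro s
          have e : ∀ ξ : E, c ξ * (l * (if ξ = t s then phat s else 0)
              + (1 - l) * (if ξ = t' s then phat s else 0))
              = l * ((if ξ = t s then phat s else 0) * c ξ)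
              + (1 - l) * ((if ξ = t' s then phat s else 0) * c ξ) := fun ξ => by ring
          rw [Finset.sum_congr rfl fun ξ _ => e ξ, Finset.sum_add_distrib,
            ← Finset.mul_sum, ← Finset.mul_sum,
            aux_sum_ite_mul Ξ (t s) (htm s) (phat s) c,
            aux_sum_ite_mul Ξ (t' s) (htm' s) (phat s) c]
        rw [Finset.sum_congr rfl fun s _ => hv s, Finset.sum_add_distrib,
          ← Finset.mul_sum, ← Finset.mul_sum, ← hVr, ← hVl, hfG]
        linear_combination (-l) * eq_t + (l - 1) * eq_t' - αstar * hcost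
  have hSne : S.Nonempty := ⟨f αstar, hfS⟩
  have hWne : W.Nonempty := ⟨f αstar, hfW⟩
  have hbddS : BddAbove S := ⟨f αstar, fun v hv => weak v hv _ hfW⟩
  have hbddW : BddBelow W := ⟨f αstar, fun w hw => weak _ hfS w hw⟩
  apply le_antisymm
  · exact le_csInf hWne fun w hw => csSup_le hSne fun v hv => weak v hv w hw
  · exact le_trans (csInf_le hbddW hfW) (le_csSup hbddS hfS)
end

section
/- (Solvability of the dual problem.) Assume ξ̂_s ∈ Ξ for every s and ε > 0. Then the dual infimum is attained: there exists (α*,β*) ∈ D such that ε·α* + Σ_{s=1}^N p̂_s β*_s ≤ ε·α + Σ_{s=1}^N p̂_s β_s for every (α,β) ∈ D. -/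
open Finset

private lemma continuous_finset_sup'_aux {ι : Type*} {s : Finset ι} (hne : s.Nonempty)
    {f : ι → ℝ → ℝ} (hf : ∀ i ∈ s, Continuous (f i)) :
    Continuous (fun x => s.sup' hne (f · x)) := by
  induction hne using Finset.Nonempty.cons_induction with
  | singleton i =>
    simpa only [Finset.sup'_singleton] using hf i (Finset.mem_singleton_self i)
  | cons a s ha hne ihs =>
    rw [Finset.forall_mem_cons] at hf
    simp only [Finset.sup'_cons, hne]
    exact hf.1.sup (ihs hf.2)

/-- Solvability of the dual problem: for `ε > 0` the dual infimum is attained. -/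
theorem dual_problem_solvable
    {E : Type*} [NormedAddCommGroup E] [NormedSpace ℝ E]
    {N : ℕ} (hN : 1 ≤ N)
    (Ξ : Finset E) (hΞ : Ξ.Nonempty)
    (ξhat : Fin N → E) (hmem : ∀ s, ξhat s ∈ Ξ)
    (phat : Fin N → ℝ) (hp0 : ∀ s, 0 ≤ phat s) (hp1 : ∑ s, phat s = 1)
    (ε : ℝ) (hε : 0 < ε) (c : E → ℝ) :
    ∃ αstar : ℝ, ∃ βstar : Fin N → ℝ,
      (0 ≤ αstar ∧
        ∀ s, ∀ ξ ∈ Ξ, c ξ ≤ αstar * ‖ξhat s - ξ‖ + βstar s) ∧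
      ∀ α : ℝ, ∀ β : Fin N → ℝ,
        0 ≤ α → (∀ s, ∀ ξ ∈ Ξ, c ξ ≤ α * ‖ξhat s - ξ‖ + β s) →
        ε * αstar + ∑ s, phat s * βstar s ≤ ε * α + ∑ s, phat s * β s := by
  -- the optimal β for a given α
  set g : ℝ → Fin N → ℝ := fun α s => Ξ.sup' hΞ (fun ξ => c ξ - α * ‖ξhat s - ξ‖) with hg
  set f : ℝ → ℝ := fun α => ε * α + ∑ s, phat s * g α s with hf
  have hgfeas : ∀ α s, ∀ ξ ∈ Ξ, c ξ ≤ α * ‖ξhat s - ξ‖ + g α s := by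
    intro α s ξ hξ
    have := Finset.le_sup' (fun ξ => c ξ - α * ‖ξhat s - ξ‖) hξ
    linarith
  -- lower bound: g α s ≥ c (ξhat s)
  have hglb : ∀ α s, c (ξhat s) ≤ g α s := by
    intro α s
    have h := Finset.le_sup' (fun ξ => c ξ - α * ‖ξhat s - ξ‖) (hmem s)
    simp only [sub_self, norm_zero, mul_zero, sub_zero] at h
    exact h
  have hflb : ∀ α, ε * α + ∑ s, phat s * c (ξhat s) ≤ f α := by
    intro α
    have : ∑ s, phat s * c (ξhat s) ≤ ∑ s, phat s * g α s :=
      Finset.sum_le_sum fun s _ => mul_le_mul_of_nonneg_left (hglb α s) (hp0 s)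
    simp only [hf]; linarith
  -- g minimizes β among feasible β for fixed α
  have hgmin : ∀ α (β : Fin N → ℝ), (∀ s, ∀ ξ ∈ Ξ, c ξ ≤ α * ‖ξhat s - ξ‖ + β s) →
      ∀ s, g α s ≤ β s := by
    intro α β hβ s
    apply Finset.sup'_le
    intro ξ hξ
    have := hβ s ξ hξ
    linarith
  -- continuity of f
  have hcont : Continuous f := by
    apply Continuous.add (continuous_const.mul continuous_id)
    apply continuous_finset_sum
    intro s _
    exact continuous_const.mul <| continuous_finset_sup'_aux hΞ
      (fun ξ _ => continuous_const.sub (continuous_id.mul continuous_const))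
  -- choose M so that f α > f 0 for α > M
  set C : ℝ := ∑ s, phat s * c (ξhat s) with hC
  set M : ℝ := max 0 ((f 0 - C) / ε) with hM
  have hM0 : (0:ℝ) ≤ M := le_max_left _ _
  have hbig : ∀ α, M < α → f 0 ≤ f α := by
    intro α hα
    have h1 : (f 0 - C) / ε < α := lt_of_le_of_lt (le_max_right _ _) hα
    have h2 : f 0 - C < ε * α := by
      rw [div_lt_iff₀ hε] at h1; linarith [h1]
    have := hflb α
    linarith
  -- minimize f on [0, M]
  obtain ⟨αstar, hαmem, hαmin⟩ :=
    (isCompact_Icc (a := (0:ℝ)) (b := M)).exists_isMinOn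
      (Set.nonempty_Icc.mpr hM0) hcont.continuousOn
  refine ⟨αstar, g αstar, ⟨hαmem.1, hgfeas αstar⟩, ?_⟩
  intro α β hα hβ
  have hβge : f α ≤ ε * α + ∑ s, phat s * β s := by
    have : ∑ s, phat s * g α s ≤ ∑ s, phat s * β s :=
      Finset.sum_le_sum fun s _ => mul_le_mul_of_nonneg_left (hgmin α β hβ s) (hp0 s)
    simp only [hf]; linarith
  have hfstar : f αstar ≤ f α := by
    rcases le_or_gt α M with h | h
    · exact hαmin (Set.mem_Icc.mpr ⟨hα, h⟩)
    · exact le_trans (hαmin (Set.mem_Icc.mpr ⟨le_refl 0, hM0⟩)) (hbig α h)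
  calc ε * αstar + ∑ s, phat s * g αstar s = f αstar := rfl
    _ ≤ f α := hfstar
    _ ≤ _ := hβge
end

section
/- (Lemma 3, finite reducibility.) There exists a finite subset Ξ_k ⊆ Ξ such that v(Ξ_k) = v(Ξ), i.e., the semi-infinite dual program with constraints indexed by all of Ξ has the same optimal value as the program with constraints indexed only by the finitely many points of Ξ_k. -/
/-!
With `C x = ∑ₛ p̂ₛ c(xₛ)` and `D x = ∑ₛ p̂ₛ ‖ξ̂ₛ - xₛ‖` on `Ξᴺ`, the dual value over `Ξ` is at most
`εα + max_{Ξᴺ} (C - α D)` for every `α ≥ 0`. For `ε > 0` this function of `α` is coercive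
(`D ξ̂ = 0`), so it has a minimizer `α₀`. Optimality at `α₀` forces maximizers at slopes `t ↓ α₀`
to have `D ≤ ε` and those at slopes `t ↑ α₀` to have `D ≥ ε`; by compactness some maximizers
`y₁`, `y₂` at `α₀` itself inherit these bounds. The affine functions `α ↦ εα + C yᵢ - α D yᵢ` both
take the optimal value at `α₀`, the first nondecreasing and the second nonincreasing, so for every
`α ≥ 0` one of them is at least the optimum: the constraints at the finitely many coordinates of
`y₁`, `y₂` already force the optimal value. For `ε = 0` the scenario points suffice, since as
`α → ∞` the penalized maximum `max_Ξ (c - α ‖ξ̂ₛ - ·‖)` decreases to `c(ξ̂ₛ)`.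
-/

/-- The optimal value (in the extended reals) of the semi-infinite dual program with
constraints indexed by the subset `S` of the support. -/
noncomputable def dualValue {E : Type*} [NormedAddCommGroup E] [NormedSpace ℝ E]
    {N : ℕ} (ξhat : Fin N → E) (phat : Fin N → ℝ) (ε : ℝ) (c : E → ℝ)
    (S : Set E) : EReal :=
  sInf { w : EReal | ∃ α : ℝ, ∃ β : Fin N → ℝ, 0 ≤ α ∧
    (∀ s, ∀ ξ ∈ S, c ξ ≤ α * ‖ξhat s - ξ‖ + β s) ∧
    w = ((ε * α + ∑ s, phat s * β s : ℝ) : EReal) }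

open Filter Topology Set

section PenalizedSup

variable {X : Type*}

noncomputable def penalizedSup (K : Set X) (C D : X → ℝ) (α : ℝ) : ℝ :=
  sSup ((fun x => C x - α * D x) '' K)

variable {K : Set X} {C D : X → ℝ} {ε α₀ : ℝ}

lemma IsMaxOn.penalizedSup_eq {x : X} {α : ℝ} (hx : x ∈ K)
    (hmax : IsMaxOn (fun x => C x - α * D x) K x) : penalizedSup K C D α = C x - α * D x :=
  IsGreatest.csSup_eq ⟨mem_image_of_mem _ hx, forall_mem_image.2 (isMaxOn_iff.1 hmax)⟩

variable [TopologicalSpace X]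

lemma le_penalizedSup (hK : IsCompact K) (hC : Continuous C) (hD : Continuous D) {x : X}
    (hx : x ∈ K) (α : ℝ) : C x - α * D x ≤ penalizedSup K C D α :=
  le_csSup (hK.bddAbove_image (by fun_prop : Continuous fun x => C x - α * D x).continuousOn)
    (mem_image_of_mem _ hx)

lemma continuous_penalizedSup (hK : IsCompact K) (hC : Continuous C) (hD : Continuous D) :
    Continuous (penalizedSup K C D) :=
  hK.continuous_sSup (f := fun α x => C x - α * D x) (by fun_prop)

lemma exists_isMinOn_Ici_of_affine_le {f : ℝ → ℝ} (hf : Continuous f) {a b : ℝ} (ha : 0 < a)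
    (hab : ∀ α, a * α + b ≤ f α) : ∃ α₀ ∈ Ici (0 : ℝ), IsMinOn f (Ici 0) α₀ := by
  refine hf.continuousOn.exists_isMinOn' isClosed_Ici self_mem_Ici ?_
  rw [(hasBasis_cocompact.inf_principal _).eventually_iff]
  refine ⟨Icc 0 ((f 0 - b) / a), isCompact_Icc, fun α ⟨hαK, hα⟩ => ?_⟩
  have hlt : (f 0 - b) / a < α := by
    by_contra! h
    exact hαK ⟨hα, h⟩
  linarith [(div_lt_iff₀' ha).1 hlt, hab α]

lemma exists_isMinOn_penalizedSup (hK : IsCompact K) (hC : Continuous C) (hD : Continuous D)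
    {x₀ : X} (hx₀ : x₀ ∈ K) (hε : D x₀ < ε) :
    ∃ α₀ ∈ Ici (0 : ℝ), IsMinOn (fun α => ε * α + penalizedSup K C D α) (Ici 0) α₀ :=
  exists_isMinOn_Ici_of_affine_le ((continuous_const_mul ε).add (continuous_penalizedSup hK hC hD))
    (sub_pos.2 hε) (b := C x₀) fun α => by
      linarith [le_penalizedSup hK hC hD hx₀ α]

/-- The one-sided optimality condition at `α₀`, tested on a maximizer at slope `t`. -/
lemma mul_sub_nonneg_of_isMinOn (hK : IsCompact K) (hC : Continuous C) (hD : Continuous D)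
    (hmin : IsMinOn (fun α => ε * α + penalizedSup K C D α) (Ici 0) α₀) {t : ℝ} (ht : 0 ≤ t)
    {x : X} (hx : x ∈ K) (hxmax : IsMaxOn (fun x => C x - t * D x) K x) :
    0 ≤ (t - α₀) * (ε - D x) := by
  have hle : ε * α₀ + penalizedSup K C D α₀ ≤ ε * t + penalizedSup K C D t := hmin ht
  rw [hxmax.penalizedSup_eq hx] at hle
  nlinarith [le_penalizedSup hK hC hD hx α₀]

lemma exists_isMaxOn_mem_of_tendsto (hK : IsCompact K) (hC : Continuous C) (hD : Continuous D)
    {t : ℕ → ℝ} {α : ℝ} (ht : Tendsto t atTop (𝓝 α)) {P : Set X} (hP : IsClosed P)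
    (hx : ∀ n, ∃ x ∈ K ∩ P, IsMaxOn (fun x => C x - t n * D x) K x) :
    ∃ y ∈ K ∩ P, IsMaxOn (fun x => C x - α * D x) K y := by
  choose x hxKP hxmax using hx
  obtain ⟨y, hy, hcluster⟩ := (hK.inter_right hP).exists_mapClusterPt (f := atTop) (u := x)
    (tendsto_principal.2 (Eventually.of_forall hxKP))
  obtain ⟨U, hU, hxy⟩ := mapClusterPt_iff_ultrafilter.1 hcluster
  have htU := ht.mono_left hU
  refine ⟨y, hy, isMaxOn_iff.2 fun z hz => ?_⟩
  exact le_of_tendsto_of_tendsto' (tendsto_const_nhds.sub (htU.mul tendsto_const_nhds))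
    (((hC.tendsto y).comp hxy).sub (htU.mul ((hD.tendsto y).comp hxy)))
    fun n => isMaxOn_iff.1 (hxmax n) z hz

lemma exists_isMaxOn_le_of_isMinOn (hK : IsCompact K) (hne : K.Nonempty) (hC : Continuous C)
    (hD : Continuous D) (hα₀ : 0 ≤ α₀)
    (hmin : IsMinOn (fun α => ε * α + penalizedSup K C D α) (Ici 0) α₀) :
    ∃ y ∈ K, IsMaxOn (fun x => C x - α₀ * D x) K y ∧ D y ≤ ε := by
  have ht : Tendsto (fun n : ℕ => α₀ + 1 / ((n : ℝ) + 1)) atTop (𝓝 α₀) := by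
    simpa using tendsto_const_nhds.add (tendsto_one_div_add_atTop_nhds_zero_nat (𝕜 := ℝ))
  obtain ⟨y, ⟨hyK, hyD⟩, hymax⟩ :=
    exists_isMaxOn_mem_of_tendsto hK hC hD ht (isClosed_le hD continuous_const) fun n => by
      obtain ⟨x, hxK, hxmax⟩ := hK.exists_isMaxOn hne
        (by fun_prop : Continuous fun x => C x - (α₀ + 1 / ((n : ℝ) + 1)) * D x).continuousOn
      have hslope := mul_sub_nonneg_of_isMinOn hK hC hD hmin (by positivity) hxK hxmax
      rw [add_sub_cancel_left] at hslope
      exact ⟨x, ⟨hxK, sub_nonneg.1 (nonneg_of_mul_nonneg_right hslope (by positivity))⟩, hxmax⟩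
  exact ⟨y, hyK, hymax, hyD⟩

lemma exists_isMaxOn_ge_of_isMinOn (hK : IsCompact K) (hne : K.Nonempty) (hC : Continuous C)
    (hD : Continuous D) (hα₀ : 0 < α₀)
    (hmin : IsMinOn (fun α => ε * α + penalizedSup K C D α) (Ici 0) α₀) :
    ∃ y ∈ K, IsMaxOn (fun x => C x - α₀ * D x) K y ∧ ε ≤ D y := by
  have ht : Tendsto (fun n : ℕ => α₀ - α₀ * (1 / ((n : ℝ) + 1))) atTop (𝓝 α₀) := by
    simpa using tendsto_const_nhds.sub (tendsto_one_div_add_atTop_nhds_zero_nat.const_mul α₀)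
  obtain ⟨y, ⟨hyK, hyD⟩, hymax⟩ :=
    exists_isMaxOn_mem_of_tendsto hK hC hD ht (isClosed_le continuous_const hD) fun n => by
      have hu : 1 / ((n : ℝ) + 1) ≤ 1 := by
        rw [div_le_one (by positivity)]
        linarith [n.cast_nonneg (α := ℝ)]
      obtain ⟨x, hxK, hxmax⟩ := hK.exists_isMaxOn hne
        (by fun_prop : Continuous fun x => C x - (α₀ - α₀ * (1 / ((n : ℝ) + 1))) * D x).continuousOn
      have hslope := mul_sub_nonneg_of_isMinOn hK hC hD hmin
        (by nlinarith [mul_le_of_le_one_right hα₀.le hu]) hxK hxmax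
      rw [sub_sub_cancel_left] at hslope
      exact ⟨x, ⟨hxK, sub_nonpos.1 (nonpos_of_mul_nonneg_right hslope
        (neg_neg_of_pos (by positivity)))⟩, hxmax⟩
  exact ⟨y, hyK, hymax, hyD⟩

theorem exists_finite_subset_penalizedSup_le (hK : IsCompact K) (hC : Continuous C)
    (hD : Continuous D) {x₀ : X} (hx₀ : x₀ ∈ K) (hε : D x₀ < ε) :
    ∃ α₀, 0 ≤ α₀ ∧ ∃ T ⊆ K, T.Finite ∧
      ∀ α, 0 ≤ α → ∃ y ∈ T, ε * α₀ + penalizedSup K C D α₀ ≤ ε * α + (C y - α * D y) := by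
  obtain ⟨α₀, hα₀, hmin⟩ := exists_isMinOn_penalizedSup hK hC hD hx₀ hε
  have hne : K.Nonempty := ⟨x₀, hx₀⟩
  obtain ⟨y₁, hy₁K, hy₁max, hy₁⟩ := exists_isMaxOn_le_of_isMinOn hK hne hC hD hα₀ hmin
  obtain ⟨y₂, hy₂K, hy₂max, hy₂⟩ : ∃ y ∈ K, IsMaxOn (fun x => C x - α₀ * D x) K y ∧
      (0 < α₀ → ε ≤ D y) := by
    rcases (mem_Ici.1 hα₀).eq_or_lt with h | h
    · exact ⟨y₁, hy₁K, hy₁max, fun h' => absurd h' (h ▸ lt_irrefl 0)⟩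
    · obtain ⟨y, hyK, hymax, hy⟩ := exists_isMaxOn_ge_of_isMinOn hK hne hC hD h hmin
      exact ⟨y, hyK, hymax, fun _ => hy⟩
  refine ⟨α₀, hα₀, {y₁, y₂}, pair_subset hy₁K hy₂K, toFinite _, fun α hα => ?_⟩
  rcases le_or_gt α₀ α with h | h
  · refine ⟨y₁, mem_insert _ _, ?_⟩
    rw [hy₁max.penalizedSup_eq hy₁K]
    nlinarith
  · refine ⟨y₂, mem_insert_of_mem _ rfl, ?_⟩
    rw [hy₂max.penalizedSup_eq hy₂K]
    nlinarith [hy₂ (hα.trans_lt h)]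

end PenalizedSup

lemma eventually_sub_mul_dist_le {X : Type*} [PseudoMetricSpace X] {K : Set X}
    (hK : IsCompact K) {c : X → ℝ} (hc : Continuous c) (z : X) {η : ℝ} (hη : 0 < η) :
    ∀ᶠ α in atTop, ∀ ξ ∈ K, c ξ - α * dist z ξ ≤ c z + η := by
  obtain ⟨δ, hδ, hcδ⟩ := Metric.continuous_iff.1 hc z η hη
  obtain ⟨M, hM⟩ := hK.bddAbove_image hc.continuousOn
  filter_upwards [eventually_ge_atTop 0, eventually_ge_atTop ((M - c z) / δ)]
    with α hα hαM ξ hξ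
  have hcξ : c ξ ≤ M := hM (mem_image_of_mem c hξ)
  rcases lt_or_ge (dist z ξ) δ with h | h
  · have hclose := hcδ ξ (by rwa [dist_comm])
    rw [Real.dist_eq, abs_lt] at hclose
    nlinarith [mul_nonneg hα (dist_nonneg (x := z) (y := ξ))]
  · nlinarith [(div_le_iff₀ hδ).1 hαM, mul_le_mul_of_nonneg_left h hα]

section DualValue

variable {E : Type*} [NormedAddCommGroup E] [NormedSpace ℝ E] {N : ℕ} {ξhat : Fin N → E}
  {phat : Fin N → ℝ} {ε : ℝ} {c : E → ℝ}

lemma dualValue_mono {S T : Set E} (hST : S ⊆ T) :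
    dualValue ξhat phat ε c S ≤ dualValue ξhat phat ε c T := by
  refine sInf_le_sInf ?_
  rintro _ ⟨α, β, hα, hβ, rfl⟩
  exact ⟨α, β, hα, fun s ξ hξ => hβ s ξ (hST hξ), rfl⟩

lemma dualValue_le {S : Set E} {α : ℝ} (hα : 0 ≤ α) (β : Fin N → ℝ)
    (hβ : ∀ s, ∀ ξ ∈ S, c ξ ≤ α * ‖ξhat s - ξ‖ + β s) :
    dualValue ξhat phat ε c S ≤ ((ε * α + ∑ s, phat s * β s : ℝ) : EReal) :=
  sInf_le ⟨α, β, hα, hβ, rfl⟩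

lemma le_dualValue (hp0 : ∀ s, 0 ≤ phat s) {S : Set E} {L : ℝ}
    (h : ∀ α, 0 ≤ α → ∃ y : Fin N → E, (∀ s, y s ∈ S) ∧
      L ≤ ε * α + (∑ s, phat s * c (y s) - α * ∑ s, phat s * ‖ξhat s - y s‖)) :
    (L : EReal) ≤ dualValue ξhat phat ε c S := by
  refine le_sInf ?_
  rintro _ ⟨α, β, hα, hβ, rfl⟩
  obtain ⟨y, hyS, hy⟩ := h α hα
  have hsum : ∑ s, phat s * c (y s) - α * ∑ s, phat s * ‖ξhat s - y s‖ ≤ ∑ s, phat s * β s := by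
    rw [Finset.mul_sum, ← Finset.sum_sub_distrib]
    exact Finset.sum_le_sum fun s _ => by nlinarith [hβ s (y s) (hyS s), hp0 s]
  exact_mod_cast hy.trans (by linarith)

lemma exists_dualValue_le {Ξ : Set E} (hΞ : IsCompact Ξ) (hmem : ∀ s, ξhat s ∈ Ξ)
    (hc : Continuous c) {α : ℝ} (hα : 0 ≤ α) :
    ∃ z : Fin N → E, (∀ s, z s ∈ Ξ) ∧ dualValue ξhat phat ε c Ξ ≤
      ((ε * α + (∑ s, phat s * c (z s) - α * ∑ s, phat s * ‖ξhat s - z s‖) : ℝ) : EReal) := by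
  have hmax (s : Fin N) : ∃ z ∈ Ξ, IsMaxOn (fun ξ => c ξ - α * ‖ξhat s - ξ‖) Ξ z :=
    hΞ.exists_isMaxOn ⟨ξhat s, hmem s⟩ (by fun_prop)
  choose z hzΞ hzmax using hmax
  have hfeas : ∀ s, ∀ ξ ∈ Ξ, c ξ ≤ α * ‖ξhat s - ξ‖ + (c (z s) - α * ‖ξhat s - z s‖) :=
    fun s ξ hξ => by linarith [isMaxOn_iff.1 (hzmax s) ξ hξ]
  refine ⟨z, hzΞ, ?_⟩
  convert dualValue_le (phat := phat) (ε := ε) hα _ hfeas using 4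
  rw [Finset.mul_sum, ← Finset.sum_sub_distrib]
  exact Finset.sum_congr rfl fun s _ => by ring

lemma dualValue_zero_le {Ξ : Set E} (hΞ : IsCompact Ξ) (hp1 : ∑ s, phat s = 1)
    (hc : Continuous c) :
    dualValue ξhat phat 0 c Ξ ≤ ((∑ s, phat s * c (ξhat s) : ℝ) : EReal) := by
  refine EReal.le_of_forall_lt_iff_le.1 fun w hw => ?_
  have hη : 0 < w - ∑ s, phat s * c (ξhat s) := sub_pos.2 (EReal.coe_lt_coe_iff.1 hw)
  obtain ⟨α, hα, hbound⟩ := ((eventually_ge_atTop 0).and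
    (eventually_all.2 fun s => eventually_sub_mul_dist_le hΞ hc (ξhat s) hη)).exists
  calc dualValue ξhat phat 0 c Ξ
      ≤ ((0 * α + ∑ s, phat s * (c (ξhat s) + (w - ∑ s, phat s * c (ξhat s))) : ℝ) : EReal) :=
        dualValue_le hα _ fun s ξ hξ => by
          have hbound := hbound s ξ hξ
          rw [dist_eq_norm] at hbound
          linarith
    _ = w := by
        simp only [zero_mul, zero_add, mul_add, Finset.sum_add_distrib, ← Finset.sum_mul, hp1]
        norm_num

end DualValue

theorem finitely_reducible_general
    {E : Type*} [NormedAddCommGroup E] [NormedSpace ℝ E]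
    {N : ℕ}
    (Ξ : Set E) (hcomp : IsCompact Ξ)
    (ξhat : Fin N → E) (hmem : ∀ s, ξhat s ∈ Ξ)
    (phat : Fin N → ℝ) (hp0 : ∀ s, 0 ≤ phat s) (hp1 : ∑ s, phat s = 1)
    (ε : ℝ) (hε : 0 ≤ ε) (c : E → ℝ) (hc : Continuous c) :
    ∃ Ξk : Set E, Ξk ⊆ Ξ ∧ Ξk.Finite ∧
      dualValue ξhat phat ε c Ξk = dualValue ξhat phat ε c Ξ := by
  rcases hε.eq_or_lt with rfl | hε
  · refine ⟨range ξhat, range_subset_iff.2 hmem, finite_range _,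
      le_antisymm (dualValue_mono (range_subset_iff.2 hmem)) ?_⟩
    exact (dualValue_zero_le hcomp hp1 hc).trans
      (le_dualValue hp0 fun α _ => ⟨ξhat, mem_range_self, by simp⟩)
  set K := univ.pi fun _ : Fin N => Ξ
  set C := fun x : Fin N → E => ∑ s, phat s * c (x s)
  set D := fun x : Fin N → E => ∑ s, phat s * ‖ξhat s - x s‖
  have hK : IsCompact K := isCompact_univ_pi fun _ => hcomp
  have hC : Continuous C := by fun_prop
  have hD : Continuous D := by fun_prop
  obtain ⟨α₀, hα₀, T, hTK, hTfin, hT⟩ :=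
    exists_finite_subset_penalizedSup_le hK hC hD (fun s _ => hmem s) (by simpa [D] using hε)
  obtain ⟨z, hzΞ, hz⟩ := exists_dualValue_le (phat := phat) (ε := ε) hcomp hmem hc hα₀
  have hTΞ : ⋃ y ∈ T, range y ⊆ Ξ :=
    iUnion₂_subset fun y hy => range_subset_iff.2 fun s => hTK hy s (mem_univ s)
  refine ⟨⋃ y ∈ T, range y, hTΞ, hTfin.biUnion fun y _ => finite_range y,
    le_antisymm (dualValue_mono hTΞ) (hz.trans ?_)⟩
  calc _ ≤ ((ε * α₀ + penalizedSup K C D α₀ : ℝ) : EReal) := by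
        gcongr
        exact le_penalizedSup hK hC hD (fun s _ => hzΞ s) α₀
    _ ≤ dualValue ξhat phat ε c (⋃ y ∈ T, range y) := le_dualValue hp0 fun α hα => by
        obtain ⟨y, hyT, hy⟩ := hT α hα
        exact ⟨y, fun s => mem_biUnion hyT (mem_range_self s), hy⟩

/-- Lemma 3, finite reducibility: there is a finite subset `Ξₖ ⊆ Ξ` such that the
semi-infinite dual program over `Ξ` has the same optimal value as over `Ξₖ`. -/
theorem finitely_reducible
    {E : Type*} [NormedAddCommGroup E] [NormedSpace ℝ E]
    {N : ℕ} (hN : 1 ≤ N)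
    (Ξ : Set E) (hne : Ξ.Nonempty) (hcomp : IsCompact Ξ)
    (ξhat : Fin N → E) (hmem : ∀ s, ξhat s ∈ Ξ)
    (phat : Fin N → ℝ) (hp0 : ∀ s, 0 ≤ phat s) (hp1 : ∑ s, phat s = 1)
    (ε : ℝ) (hε : 0 ≤ ε) (c : E → ℝ) (hc : Continuous c) :
    ∃ Ξk : Set E, Ξk ⊆ Ξ ∧ Ξk.Finite ∧
      dualValue ξhat phat ε c Ξk = dualValue ξhat phat ε c Ξ :=
  finitely_reducible_general Ξ hcomp ξhat hmem phat hp0 hp1 ε hε c hc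
end

section
/- (Proposition 2, deterministic equivalent of the two-stage distributionally robust problem with discretized support.) Assume ξ̂_s ∈ Ξ for every s and ε ≥ 0. Let X be a nonempty finite set of first-stage decisions, g : X → ℝ a first-stage cost, and c : X × Ξ → ℝ a scenario-dependent second-stage cost. Then min_{x∈X} ( g(x) + sup_{u∈U} Σ_{s=1}^N Σ_{ξ∈Ξ} c(x,ξ)·u(s,ξ) ) = inf { g(x) + ε·α + Σ_{s=1}^N p̂_s β_s : x ∈ X, α ≥ 0, β ∈ ℝ^N, and α‖ξ̂_s − ξ‖ + β_s ≥ c(x,ξ) for every s ∈ {1,…,N} and every ξ ∈ Ξ }. -/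
open Finset

lemma sum_two_point {E : Type*} [DecidableEq E] (Ξ : Finset E) {a b : E} (ha : a ∈ Ξ) (hb : b ∈ Ξ)
    (t p : ℝ) (h : E → ℝ) :
    ∑ ξ ∈ Ξ, (p * (t * (if ξ = a then (1:ℝ) else 0) + (1 - t) * (if ξ = b then 1 else 0))) * h ξ
      = p * (t * h a + (1 - t) * h b) := by
  have key : ∀ ξ ∈ Ξ,
      (p * (t * (if ξ = a then (1:ℝ) else 0) + (1 - t) * (if ξ = b then 1 else 0))) * h ξ
      = (p * t) * (if ξ = a then h ξ else 0) + (p * (1-t)) * (if ξ = b then h ξ else 0) := by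
    intro ξ _
    rcases eq_or_ne ξ a with rfl | h1 <;> rcases eq_or_ne ξ b with rfl | h2 <;>
      simp [*] <;> ring
  rw [Finset.sum_congr rfl key, Finset.sum_add_distrib, ← Finset.mul_sum, ← Finset.mul_sum,
    Finset.sum_ite_eq' Ξ a, Finset.sum_ite_eq' Ξ b]
  simp [ha, hb]; ring

lemma weak_dual {E : Type*} [NormedAddCommGroup E] {N : ℕ} (Ξ : Finset E)
    (ξhat : Fin N → E) (phat : Fin N → ℝ) (ε : ℝ) (C : E → ℝ)
    (u : Fin N → E → ℝ) (α : ℝ) (β : Fin N → ℝ)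
    (hu0 : ∀ s, ∀ ξ ∈ Ξ, 0 ≤ u s ξ)
    (husum : ∀ s, ∑ ξ ∈ Ξ, u s ξ = phat s)
    (hubud : (∑ s, ∑ ξ ∈ Ξ, u s ξ * ‖ξhat s - ξ‖) ≤ ε)
    (hα : 0 ≤ α)
    (hβ : ∀ s, ∀ ξ ∈ Ξ, C ξ ≤ α * ‖ξhat s - ξ‖ + β s) :
    (∑ s, ∑ ξ ∈ Ξ, C ξ * u s ξ) ≤ ε * α + ∑ s, phat s * β s := by
  have step : ∀ s, ∑ ξ ∈ Ξ, C ξ * u s ξ ≤ α * (∑ ξ ∈ Ξ, u s ξ * ‖ξhat s - ξ‖) + phat s * β s := by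
    intro s
    have h1 : ∑ ξ ∈ Ξ, C ξ * u s ξ ≤ ∑ ξ ∈ Ξ, (α * ‖ξhat s - ξ‖ + β s) * u s ξ :=
      Finset.sum_le_sum fun ξ hξ => mul_le_mul_of_nonneg_right (hβ s ξ hξ) (hu0 s ξ hξ)
    have h2 : ∑ ξ ∈ Ξ, (α * ‖ξhat s - ξ‖ + β s) * u s ξ
        = α * (∑ ξ ∈ Ξ, u s ξ * ‖ξhat s - ξ‖) + β s * (∑ ξ ∈ Ξ, u s ξ) := by
      rw [Finset.mul_sum, Finset.mul_sum, ← Finset.sum_add_distrib]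
      exact Finset.sum_congr rfl fun ξ _ => by ring
    rw [h2, husum s] at h1
    linarith [h1]
  have h3 : (∑ s, ∑ ξ ∈ Ξ, C ξ * u s ξ)
      ≤ α * (∑ s, ∑ ξ ∈ Ξ, u s ξ * ‖ξhat s - ξ‖) + ∑ s, phat s * β s := by
    calc (∑ s, ∑ ξ ∈ Ξ, C ξ * u s ξ)
        ≤ ∑ s, (α * (∑ ξ ∈ Ξ, u s ξ * ‖ξhat s - ξ‖) + phat s * β s) :=
          Finset.sum_le_sum fun s _ => step s
      _ = α * (∑ s, ∑ ξ ∈ Ξ, u s ξ * ‖ξhat s - ξ‖) + ∑ s, phat s * β s := by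
          rw [Finset.sum_add_distrib, Finset.mul_sum]
  have h4 : α * (∑ s, ∑ ξ ∈ Ξ, u s ξ * ‖ξhat s - ξ‖) ≤ α * ε := mul_le_mul_of_nonneg_left hubud hα
  nlinarith [h3, h4]


section
variable {E : Type*} [NormedAddCommGroup E] [NormedSpace ℝ E]
variable {E : Type*} [NormedAddCommGroup E] [NormedSpace ℝ E]


set_option maxHeartbeats 1000000 in
lemma strong_dual {N : ℕ} (hN : 1 ≤ N) (Ξ : Finset E) (hΞ : Ξ.Nonempty)
    (ξhat : Fin N → E) (hmem : ∀ s, ξhat s ∈ Ξ)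
    (phat : Fin N → ℝ) (hp0 : ∀ s, 0 ≤ phat s)
    (ε : ℝ) (hε : 0 ≤ ε) (C : E → ℝ) :
    ∃ (α : ℝ) (β : Fin N → ℝ) (u : Fin N → E → ℝ),
      0 ≤ α ∧ (∀ s, ∀ ξ ∈ Ξ, C ξ ≤ α * ‖ξhat s - ξ‖ + β s) ∧
      (∀ s, ∀ ξ ∈ Ξ, 0 ≤ u s ξ) ∧ (∀ s, ∑ ξ ∈ Ξ, u s ξ = phat s) ∧
      (∑ s, ∑ ξ ∈ Ξ, u s ξ * ‖ξhat s - ξ‖) ≤ ε ∧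
      (∑ s, ∑ ξ ∈ Ξ, C ξ * u s ξ) = ε * α + ∑ s, phat s * β s := by
  classical
  haveI : NeZero N := ⟨by omega⟩
  set d : Fin N → E → ℝ := fun s ξ => ‖ξhat s - ξ‖ with hd
  have hd0 : ∀ s ξ, 0 ≤ d s ξ := fun s ξ => norm_nonneg _
  have hdhat : ∀ s, d s (ξhat s) = 0 := fun s => by simp [hd]
  set f : ℝ → Fin N → E → ℝ := fun α s ξ => C ξ - α * d s ξ with hf
  set m : ℝ → Fin N → ℝ := fun α s => Ξ.sup' hΞ (f α s) with hm
  set A : ℝ → Fin N → Finset E := fun α s => Ξ.filter (fun ξ => m α s ≤ f α s ξ) with hA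
  have hAsub : ∀ α s, A α s ⊆ Ξ := fun α s => Finset.filter_subset _ _
  have hfle : ∀ α s, ∀ ξ ∈ Ξ, f α s ξ ≤ m α s := fun α s ξ hξ => Finset.le_sup' _ hξ
  have hAne : ∀ α s, (A α s).Nonempty := by
    intro α s
    obtain ⟨ξ, hξ, heq⟩ := Finset.exists_mem_eq_sup' hΞ (f α s)
    exact ⟨ξ, Finset.mem_filter.mpr ⟨hξ, heq.le⟩⟩
  have hAeq : ∀ α s, ∀ ξ ∈ A α s, f α s ξ = m α s := by
    intro α s ξ hξ
    have := (Finset.mem_filter.mp hξ)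
    exact le_antisymm (hfle α s ξ this.1) this.2
  -- lo / hi elements
  have hloE : ∀ α s, ∃ ξ ∈ A α s, ∀ ξ' ∈ A α s, d s ξ ≤ d s ξ' :=
    fun α s => Finset.exists_min_image (A α s) (d s) (hAne α s)
  have hhiE : ∀ α s, ∃ ξ ∈ A α s, ∀ ξ' ∈ A α s, d s ξ' ≤ d s ξ :=
    fun α s => Finset.exists_max_image (A α s) (d s) (hAne α s)
  set lo : ℝ → Fin N → E := fun α s => (hloE α s).choose with hlo
  set hi : ℝ → Fin N → E := fun α s => (hhiE α s).choose with hhi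
  have lo_mem : ∀ α s, lo α s ∈ A α s := fun α s => (hloE α s).choose_spec.1
  have lo_min : ∀ α s, ∀ ξ' ∈ A α s, d s (lo α s) ≤ d s ξ' :=
    fun α s => (hloE α s).choose_spec.2
  have hi_mem : ∀ α s, hi α s ∈ A α s := fun α s => (hhiE α s).choose_spec.1
  have hi_max : ∀ α s, ∀ ξ' ∈ A α s, d s ξ' ≤ d s (hi α s) :=
    fun α s => (hhiE α s).choose_spec.2
  set Dlo : ℝ → ℝ := fun α => ∑ s, phat s * d s (lo α s) with hDlo
  set Dhi : ℝ → ℝ := fun α => ∑ s, phat s * d s (hi α s) with hDhi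
  have Dlohi : ∀ α, Dlo α ≤ Dhi α := by
    intro α
    exact Finset.sum_le_sum fun s _ =>
      mul_le_mul_of_nonneg_left (hi_max α s _ (lo_mem α s)) (hp0 s)
  -- the "build" step
  have build : ∀ (α t : ℝ) (xlo xhi : Fin N → E), 0 ≤ α → 0 ≤ t → t ≤ 1 →
      (∀ s, xlo s ∈ A α s) → (∀ s, xhi s ∈ A α s) →
      (∑ s, phat s * (t * d s (xlo s) + (1 - t) * d s (xhi s))) ≤ ε →
      α * (∑ s, phat s * (t * d s (xlo s) + (1 - t) * d s (xhi s))) = α * ε →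
      ∃ (α' : ℝ) (β : Fin N → ℝ) (u : Fin N → E → ℝ),
      0 ≤ α' ∧ (∀ s, ∀ ξ ∈ Ξ, C ξ ≤ α' * ‖ξhat s - ξ‖ + β s) ∧
      (∀ s, ∀ ξ ∈ Ξ, 0 ≤ u s ξ) ∧ (∀ s, ∑ ξ ∈ Ξ, u s ξ = phat s) ∧
      (∑ s, ∑ ξ ∈ Ξ, u s ξ * ‖ξhat s - ξ‖) ≤ ε ∧
      (∑ s, ∑ ξ ∈ Ξ, C ξ * u s ξ) = ε * α' + ∑ s, phat s * β s := by
    intro α t xlo xhi hα ht0 ht1 hxlo hxhi hbud heqb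
    refine ⟨α, m α, fun s ξ => phat s * (t * (if ξ = xlo s then 1 else 0)
      + (1 - t) * (if ξ = xhi s then 1 else 0)), hα, ?_, ?_, ?_, ?_, ?_⟩
    · intro s ξ hξ
      have := hfle α s ξ hξ
      simp only [hf] at this
      linarith
    · intro s ξ _
      have h1 : (0:ℝ) ≤ (if ξ = xlo s then (1:ℝ) else 0) := by split <;> norm_num
      have h2 : (0:ℝ) ≤ (if ξ = xhi s then (1:ℝ) else 0) := by split <;> norm_num
      have : (0:ℝ) ≤ t * (if ξ = xlo s then 1 else 0) + (1 - t) * (if ξ = xhi s then 1 else 0) :=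
        add_nonneg (mul_nonneg ht0 h1) (mul_nonneg (by linarith) h2)
      exact mul_nonneg (hp0 s) this
    · intro s
      have := sum_two_point Ξ (hAsub α s (hxlo s)) (hAsub α s (hxhi s)) t (phat s) (fun _ => (1:ℝ))
      simpa using this
    · have : ∀ s : Fin N, ∑ ξ ∈ Ξ, (phat s * (t * (if ξ = xlo s then (1:ℝ) else 0)
          + (1 - t) * (if ξ = xhi s then 1 else 0))) * ‖ξhat s - ξ‖
          = phat s * (t * d s (xlo s) + (1 - t) * d s (xhi s)) := by
        intro s
        exact sum_two_point Ξ (hAsub α s (hxlo s)) (hAsub α s (hxhi s)) t (phat s) (d s)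
      rw [Finset.sum_congr rfl fun s _ => this s]
      exact hbud
    · have hC : ∀ (s : Fin N) (ξ : E), ξ ∈ A α s → C ξ = m α s + α * d s ξ := by
        intro s ξ hξ
        have := hAeq α s ξ hξ
        simp only [hf] at this
        linarith
      have hsum : ∀ s : Fin N, ∑ ξ ∈ Ξ, C ξ * (phat s * (t * (if ξ = xlo s then (1:ℝ) else 0)
          + (1 - t) * (if ξ = xhi s then 1 else 0)))
          = phat s * (t * C (xlo s) + (1 - t) * C (xhi s)) := by
        intro s
        rw [Finset.sum_congr rfl (fun ξ _ => mul_comm (C ξ) _)]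
        exact sum_two_point Ξ (hAsub α s (hxlo s)) (hAsub α s (hxhi s)) t (phat s) C
      rw [Finset.sum_congr rfl fun s _ => hsum s]
      have expand : ∀ s : Fin N, phat s * (t * C (xlo s) + (1 - t) * C (xhi s))
          = phat s * m α s + α * (phat s * (t * d s (xlo s) + (1 - t) * d s (xhi s))) := by
        intro s
        rw [hC s _ (hxlo s), hC s _ (hxhi s)]
        ring
      rw [Finset.sum_congr rfl fun s _ => expand s, Finset.sum_add_distrib, ← Finset.mul_sum, heqb]
      ring
  -- product index set
  set Pp : Finset (Fin N × E) := Finset.univ ×ˢ Ξ with hPp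
  have hPpne : Pp.Nonempty := Finset.Nonempty.product Finset.univ_nonempty hΞ
  -- R bound
  set R : Fin N → ℝ := fun s => Ξ.sup' hΞ (d s) with hR
  have hRd : ∀ s, ∀ ξ ∈ Ξ, d s ξ ≤ R s := fun s ξ hξ => Finset.le_sup' _ hξ
  have hR0 : ∀ s, 0 ≤ R s := fun s => (hdhat s) ▸ hRd s (ξhat s) (hmem s)
  -- neighborhood lemma
  have nbhd : ∀ α₀ : ℝ, ∃ δ > 0, ∀ α : ℝ, |α - α₀| < δ → ∀ s, A α s ⊆ A α₀ s := by
    intro α₀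
    set δ : ℝ := Pp.inf' hPpne (fun p => if f α₀ p.1 p.2 < m α₀ p.1
        then (m α₀ p.1 - f α₀ p.1 p.2) / (1 + R p.1) else 1) with hδ
    have hδpos : 0 < δ := by
      rw [hδ, Finset.lt_inf'_iff]
      intro p hp
      split_ifs with h
      · exact div_pos (by linarith) (by linarith [hR0 p.1])
      · norm_num
    refine ⟨δ, hδpos, ?_⟩
    intro α hα s ξ hξA
    have hξΞ : ξ ∈ Ξ := hAsub α s hξA
    by_contra hnot
    have hlt : f α₀ s ξ < m α₀ s := by
      rcases lt_or_ge (f α₀ s ξ) (m α₀ s) with h | h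
      · exact h
      · exact absurd (Finset.mem_filter.mpr ⟨hξΞ, h⟩) hnot
    have hmemP : (s, ξ) ∈ Pp := by
      rw [hPp]; exact Finset.mem_product.mpr ⟨Finset.mem_univ s, hξΞ⟩
    have hδle : δ ≤ (m α₀ s - f α₀ s ξ) / (1 + R s) := by
      have := Finset.inf'_le (f := fun p : Fin N × E => if f α₀ p.1 p.2 < m α₀ p.1
          then (m α₀ p.1 - f α₀ p.1 p.2) / (1 + R p.1) else 1) hmemP
      rw [if_pos hlt] at this
      exact this
    have hξ'Ξ : lo α₀ s ∈ Ξ := hAsub α₀ s (lo_mem α₀ s)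
    have e1 : f α s (lo α₀ s) ≤ f α s ξ := (hAeq α s ξ hξA) ▸ hfle α s (lo α₀ s) hξ'Ξ
    have e2 : f α₀ s (lo α₀ s) = m α₀ s := hAeq α₀ s (lo α₀ s) (lo_mem α₀ s)
    have hgap : 0 < m α₀ s - f α₀ s ξ := by linarith
    have hexp : m α₀ s - f α₀ s ξ ≤ (α₀ - α) * (d s ξ - d s (lo α₀ s)) := by
      simp only [hf] at e1 e2 ⊢
      nlinarith [e1, e2]
    have hdb : |d s ξ - d s (lo α₀ s)| ≤ R s := by
      rw [abs_le]
      constructor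
      · linarith [hd0 s ξ, hRd s (lo α₀ s) hξ'Ξ]
      · linarith [hd0 s (lo α₀ s), hRd s ξ hξΞ]
    have hstep : m α₀ s - f α₀ s ξ ≤ |α - α₀| * R s := by
      calc m α₀ s - f α₀ s ξ ≤ (α₀ - α) * (d s ξ - d s (lo α₀ s)) := hexp
        _ ≤ |(α₀ - α) * (d s ξ - d s (lo α₀ s))| := le_abs_self _
        _ = |α₀ - α| * |d s ξ - d s (lo α₀ s)| := abs_mul _ _
        _ ≤ |α₀ - α| * R s := mul_le_mul_of_nonneg_left hdb (abs_nonneg _)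
        _ = |α - α₀| * R s := by rw [abs_sub_comm]
    have h1 : |α - α₀| * R s ≤ δ * R s := mul_le_mul_of_nonneg_right hα.le (hR0 s)
    have h2 : δ * (1 + R s) ≤ m α₀ s - f α₀ s ξ :=
      (le_div_iff₀ (by linarith [hR0 s])).mp hδle
    nlinarith [hδpos, hR0 s]
  -- main case analysis
  by_cases hcase : Dlo 0 ≤ ε
  · refine build 0 1 (lo 0) (lo 0) le_rfl zero_le_one le_rfl (lo_mem 0) (lo_mem 0) ?_ ?_
    · have e : (∑ s, phat s * (1 * d s (lo 0 s) + (1-1) * d s (lo 0 s))) = Dlo 0 := by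
        rw [hDlo]; exact Finset.sum_congr rfl fun s _ => by ring
      rw [e]; exact hcase
    · rw [zero_mul, zero_mul]
  · push_neg at hcase
    set S : Set ℝ := {α : ℝ | 0 ≤ α ∧ Dlo α ≤ ε} with hS
    have hbig : ∃ αb : ℝ, αb ∈ S := by
      set K : ℝ := Pp.sup' hPpne (fun p => if p.2 = ξhat p.1 then 0
          else (C p.2 - C (ξhat p.1)) / d p.1 p.2) with hK
      set αb : ℝ := max K 0 + 1 with hαb
      have hαb0 : 0 ≤ αb := by rw [hαb]; have := le_max_right K 0; linarith
      have hAb : ∀ s, ∀ ξ ∈ A αb s, ξ = ξhat s := by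
        intro s ξ hξ
        by_contra hne
        have hξΞ := hAsub αb s hξ
        have hd_pos : 0 < d s ξ := by
          simp only [hd]
          rw [norm_pos_iff]
          intro h
          exact hne (sub_eq_zero.mp h).symm
        have hmemP : (s, ξ) ∈ Pp := by
          rw [hPp]; exact Finset.mem_product.mpr ⟨Finset.mem_univ s, hξΞ⟩
        have hKle : (C ξ - C (ξhat s)) / d s ξ ≤ K := by
          have := Finset.le_sup' (f := fun p : Fin N × E => if p.2 = ξhat p.1 then 0
              else (C p.2 - C (ξhat p.1)) / d p.1 p.2) hmemP
          rw [if_neg hne] at this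
          exact this
        have h1 : C ξ - C (ξhat s) ≤ K * d s ξ := (div_le_iff₀ hd_pos).mp hKle
        have h2 : f αb s (ξhat s) ≤ m αb s := hfle αb s _ (hmem s)
        have h3 : f αb s ξ = m αb s := hAeq αb s ξ hξ
        simp only [hf, hdhat s, mul_zero, sub_zero] at h2 h3
        have h4 : K ≤ max K 0 := le_max_left K 0
        have h5 : αb = max K 0 + 1 := hαb
        nlinarith [hd_pos]
      have hz : ∀ s, d s (lo αb s) = 0 := fun s => by rw [hAb s _ (lo_mem αb s), hdhat]
      refine ⟨αb, hαb0, ?_⟩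
      have : Dlo αb = 0 := by
        rw [hDlo]
        simp only []
        rw [Finset.sum_congr rfl fun s _ => by rw [hz s, mul_zero]]
        exact Finset.sum_const_zero
      linarith
    obtain ⟨αb, hαbS⟩ := hbig
    have hSne : S.Nonempty := ⟨αb, hαbS⟩
    have hSbdd : BddBelow S := ⟨0, fun a ha => ha.1⟩
    set αs : ℝ := sInf S with hαs
    have hαs0 : 0 ≤ αs := le_csInf hSne fun a ha => ha.1
    obtain ⟨δ, hδpos, hnb⟩ := nbhd αs
    have claimA : Dlo αs ≤ ε := by
      obtain ⟨α', hα'S, hα'lt⟩ := exists_lt_of_csInf_lt hSne (show sInf S < αs + δ by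
        rw [← hαs]; linarith)
      have hge : αs ≤ α' := csInf_le hSbdd hα'S
      have hsub := hnb α' (by rw [abs_lt]; constructor <;> linarith)
      have hdd : ∀ s, d s (lo αs s) ≤ d s (lo α' s) :=
        fun s => lo_min αs s _ (hsub s (lo_mem α' s))
      have h4 : Dlo αs ≤ Dlo α' :=
        Finset.sum_le_sum fun s _ => mul_le_mul_of_nonneg_left (hdd s) (hp0 s)
      linarith [hα'S.2]
    have claimB : ε ≤ Dhi αs := by
      rcases eq_or_lt_of_le hαs0 with heq | hpos
      · rw [← heq]; linarith [Dlohi 0, hcase]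
      · set α : ℝ := αs - min (δ/2) (αs/2) with hα
        have h1 : 0 < min (δ/2) (αs/2) := lt_min (by linarith) (by linarith)
        have h2 : 0 < α := by
          rw [hα]; have := min_le_right (δ/2) (αs/2); linarith
        have h3 : α < αs := by rw [hα]; linarith
        have h5 : |α - αs| < δ := by
          rw [abs_lt]
          constructor
          · rw [hα]; have := min_le_left (δ/2) (αs/2); linarith
          · linarith
        have hnotS : α ∉ S := fun hm => absurd (csInf_le hSbdd hm) (by rw [← hαs]; linarith)
        have h6 : ε < Dlo α := by
          by_contra h
          exact hnotS ⟨h2.le, le_of_not_gt h⟩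
        have hsub := hnb α h5
        have hdd : ∀ s, d s (lo α s) ≤ d s (hi αs s) :=
          fun s => hi_max αs s _ (hsub s (lo_mem α s))
        have h7 : Dlo α ≤ Dhi αs :=
          Finset.sum_le_sum fun s _ => mul_le_mul_of_nonneg_left (hdd s) (hp0 s)
        linarith
    rcases eq_or_lt_of_le (Dlohi αs) with heq | hlt
    · have hDe : Dlo αs = ε := le_antisymm claimA (heq ▸ claimB)
      refine build αs 1 (lo αs) (lo αs) hαs0 zero_le_one le_rfl (lo_mem αs) (lo_mem αs) ?_ ?_
      · have e : (∑ s, phat s * (1 * d s (lo αs s) + (1-1) * d s (lo αs s))) = Dlo αs := by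
          rw [hDlo]; exact Finset.sum_congr rfl fun s _ => by ring
        rw [e, hDe]
      · have e : (∑ s, phat s * (1 * d s (lo αs s) + (1-1) * d s (lo αs s))) = Dlo αs := by
          rw [hDlo]; exact Finset.sum_congr rfl fun s _ => by ring
        rw [e, hDe]
    · set t : ℝ := (Dhi αs - ε)/(Dhi αs - Dlo αs) with ht
      have hden : 0 < Dhi αs - Dlo αs := by linarith
      have ht0 : 0 ≤ t := div_nonneg (by linarith) hden.le
      have ht1 : t ≤ 1 := (div_le_one hden).mpr (by linarith)
      have hbudget : (∑ s, phat s * (t * d s (lo αs s) + (1-t) * d s (hi αs s))) = ε := by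
        have e : ∀ s : Fin N, phat s * (t * d s (lo αs s) + (1-t) * d s (hi αs s))
            = t * (phat s * d s (lo αs s)) + (1-t) * (phat s * d s (hi αs s)) := fun s => by ring
        rw [Finset.sum_congr rfl fun s _ => e s, Finset.sum_add_distrib,
          ← Finset.mul_sum, ← Finset.mul_sum]
        have e1 : (∑ s, phat s * d s (lo αs s)) = Dlo αs := by rw [hDlo]
        have e2 : (∑ s, phat s * d s (hi αs s)) = Dhi αs := by rw [hDhi]
        rw [e1, e2]
        have e3 : t * (Dhi αs - Dlo αs) = Dhi αs - ε := by
          rw [ht]; field_simp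
        nlinarith [e3]
      exact build αs t (lo αs) (hi αs) hαs0 ht0 ht1 (lo_mem αs) (hi_mem αs)
        (le_of_eq hbudget) (by rw [hbudget])

end

set_option maxHeartbeats 1000000 in
/-- Proposition 2: deterministic equivalent of the two-stage distributionally robust
problem with discretized support. The min over first-stage decisions of the
first-stage cost plus the worst-case expected second-stage cost over the discretized
Wasserstein ambiguity set equals the optimal value of the deterministic equivalent. -/
theorem deterministic_equivalent_two_stage
    {E : Type*} [NormedAddCommGroup E] [NormedSpace ℝ E]
    {N : ℕ} (hN : 1 ≤ N)
    (Ξ : Finset E) (hΞ : Ξ.Nonempty)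
    (ξhat : Fin N → E) (hmem : ∀ s, ξhat s ∈ Ξ)
    (phat : Fin N → ℝ) (hp0 : ∀ s, 0 ≤ phat s) (hp1 : ∑ s, phat s = 1)
    (ε : ℝ) (hε : 0 ≤ ε)
    (X : Type*) [Fintype X] [Nonempty X]
    (g : X → ℝ) (c : X → E → ℝ) :
    (⨅ x : X, (g x + sSup { w : ℝ | ∃ u : Fin N → E → ℝ,
        (∀ s, ∀ ξ ∈ Ξ, 0 ≤ u s ξ) ∧
        (∀ s, ∑ ξ ∈ Ξ, u s ξ = phat s) ∧
        (∑ s, ∑ ξ ∈ Ξ, u s ξ * ‖ξhat s - ξ‖) ≤ ε ∧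
        w = ∑ s, ∑ ξ ∈ Ξ, c x ξ * u s ξ }))
    = sInf { v : ℝ | ∃ x : X, ∃ α : ℝ, ∃ β : Fin N → ℝ, 0 ≤ α ∧
        (∀ s, ∀ ξ ∈ Ξ, c x ξ ≤ α * ‖ξhat s - ξ‖ + β s) ∧
        v = g x + ε * α + ∑ s, phat s * β s } := by
  classical
  set Pset : X → Set ℝ := fun x => { w : ℝ | ∃ u : Fin N → E → ℝ,
        (∀ s, ∀ ξ ∈ Ξ, 0 ≤ u s ξ) ∧
        (∀ s, ∑ ξ ∈ Ξ, u s ξ = phat s) ∧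
        (∑ s, ∑ ξ ∈ Ξ, u s ξ * ‖ξhat s - ξ‖) ≤ ε ∧
        w = ∑ s, ∑ ξ ∈ Ξ, c x ξ * u s ξ } with hPset
  set Dset : Set ℝ := { v : ℝ | ∃ x : X, ∃ α : ℝ, ∃ β : Fin N → ℝ, 0 ≤ α ∧
        (∀ s, ∀ ξ ∈ Ξ, c x ξ ≤ α * ‖ξhat s - ξ‖ + β s) ∧
        v = g x + ε * α + ∑ s, phat s * β s } with hDset
  -- strong duality data for each x
  have SD := fun x : X => strong_dual hN Ξ hΞ ξhat hmem phat hp0 ε hε (c x)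
  choose αf βf uf hαf hβf huf0 hufsum hufbud hufval using SD
  -- each primal set is nonempty
  have Pne : ∀ x, (Pset x).Nonempty := fun x =>
    ⟨_, uf x, huf0 x, hufsum x, hufbud x, rfl⟩
  -- each primal set is bounded above
  have Pbdd : ∀ x, BddAbove (Pset x) := by
    intro x
    refine ⟨ε * αf x + ∑ s, phat s * βf x s, ?_⟩
    rintro w ⟨u, hu0, husum, hubud, rfl⟩
    exact weak_dual Ξ ξhat phat ε (c x) u (αf x) (βf x) hu0 husum hubud (hαf x) (hβf x)
  -- dual set nonempty
  have Dne : Dset.Nonempty := by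
    obtain ⟨x0⟩ := (inferInstance : Nonempty X)
    exact ⟨g x0 + ε * αf x0 + ∑ s, phat s * βf x0 s,
      ⟨x0, αf x0, βf x0, hαf x0, hβf x0, rfl⟩⟩
  -- dual set bounded below
  have Dbdd : BddBelow Dset := by
    refine ⟨⨅ x : X, (g x + ∑ s, phat s * c x (ξhat s)), ?_⟩
    rintro v ⟨x, α, β, hα, hβ, rfl⟩
    have h1 : (⨅ x : X, (g x + ∑ s, phat s * c x (ξhat s)))
        ≤ g x + ∑ s, phat s * c x (ξhat s) :=
      ciInf_le (Finite.bddBelow_range _) x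
    have h2 : ∀ s : Fin N, c x (ξhat s) ≤ β s := by
      intro s
      have := hβ s (ξhat s) (hmem s)
      simpa using this
    have h3 : (∑ s, phat s * c x (ξhat s)) ≤ ∑ s, phat s * β s :=
      Finset.sum_le_sum fun s _ => mul_le_mul_of_nonneg_left (h2 s) (hp0 s)
    have h4 : 0 ≤ ε * α := mul_nonneg hε hα
    linarith
  apply le_antisymm
  · refine le_csInf Dne ?_
    rintro v ⟨x, α, β, hα, hβ, rfl⟩
    have h1 : (⨅ x : X, (g x + sSup (Pset x))) ≤ g x + sSup (Pset x) :=
      ciInf_le (Finite.bddBelow_range _) x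
    have h2 : sSup (Pset x) ≤ ε * α + ∑ s, phat s * β s := by
      refine csSup_le (Pne x) ?_
      rintro w ⟨u, hu0, husum, hubud, rfl⟩
      exact weak_dual Ξ ξhat phat ε (c x) u α β hu0 husum hubud hα hβ
    linarith
  · refine le_ciInf ?_
    intro x
    have h1 : sInf Dset ≤ g x + ε * αf x + ∑ s, phat s * βf x s :=
      csInf_le Dbdd ⟨x, αf x, βf x, hαf x, hβf x, rfl⟩
    have h2 : ε * αf x + ∑ s, phat s * βf x s ≤ sSup (Pset x) := by
      rw [← hufval x]
      exact le_csSup (Pbdd x) ⟨uf x, huf0 x, hufsum x, hufbud x, rfl⟩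
    linarith
end

section
/- (Proposition 3, finite reducibility of the two-stage deterministic equivalent.) Let X be a nonempty finite set of first-stage decisions, g : X → ℝ a first-stage cost, and Q : X × E → ℝ a second-stage value function such that ξ ↦ Q(x,ξ) is continuous for each x ∈ X. For a subset S ⊆ Ξ define V(S) = min_{x∈X} inf { g(x) + ε·α + Σ_{s=1}^N p̂_s β_s : α ≥ 0, β ∈ ℝ^N, and α‖ξ̂_s − ξ‖ + β_s ≥ Q(x,ξ) for every s ∈ {1,…,N} and every ξ ∈ S }. Then there exists a finite subset Ξ_k ⊆ Ξ such that V(Ξ_k) = V(Ξ). -/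
open Filter Topology

private lemma ereal_le_coe_of_forall (a : EReal) (r : ℝ)
    (h : ∀ η : ℝ, 0 < η → a ≤ ((r + η : ℝ) : EReal)) : a ≤ (r : EReal) := by
  by_contra h'
  push_neg at h'
  induction a with
  | bot => exact absurd h' (by simp)
  | coe y =>
    rw [EReal.coe_lt_coe_iff] at h'
    have := h ((y - r) / 2) (by linarith)
    rw [EReal.coe_le_coe_iff] at this
    linarith
  | top =>
    have := h 1 one_pos
    exact (EReal.coe_ne_top (r + 1)) (top_le_iff.mp this)

/-- Key analytic lemma: finite reduction for a single second-stage function `q`. -/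
private lemma exists_finite_reduction
    {E : Type*} [NormedAddCommGroup E]
    {N : ℕ}
    (Ξ : Set E) (hne : Ξ.Nonempty) (hcomp : IsCompact Ξ)
    (ξhat : Fin N → E) (hmem : ∀ s, ξhat s ∈ Ξ)
    (phat : Fin N → ℝ) (hp0 : ∀ s, 0 ≤ phat s) (hp1 : ∑ s, phat s = 1)
    (ε : ℝ) (hε : 0 ≤ ε) (q : E → ℝ) (hq : Continuous q) :
    ∃ F : Set E, F ⊆ Ξ ∧ F.Finite ∧ ∃ c : ℝ,
      (∀ α : ℝ, ∀ β : Fin N → ℝ, 0 ≤ α →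
        (∀ s, ∀ ξ ∈ F, q ξ ≤ α * ‖ξhat s - ξ‖ + β s) →
        c ≤ ε * α + ∑ s, phat s * β s) ∧
      (∀ η : ℝ, 0 < η → ∃ α : ℝ, ∃ β : Fin N → ℝ, 0 ≤ α ∧
        (∀ s, ∀ ξ ∈ Ξ, q ξ ≤ α * ‖ξhat s - ξ‖ + β s) ∧
        ε * α + ∑ s, phat s * β s ≤ c + η) := by
  classical
  -- maximizers of ξ ↦ q ξ - α * ‖ξhat s - ξ‖ over Ξ
  have hK : ∀ (α : ℝ) (s : Fin N), ∃ ξ, ξ ∈ Ξ ∧ ∀ ζ ∈ Ξ,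
      q ζ - α * ‖ξhat s - ζ‖ ≤ q ξ - α * ‖ξhat s - ξ‖ := by
    intro α s
    obtain ⟨ξ, hξ, hmax⟩ := hcomp.exists_isMaxOn hne
      (f := fun ζ => q ζ - α * ‖ξhat s - ζ‖)
      ((hq.sub (continuous_const.mul ((continuous_const.sub continuous_id).norm))).continuousOn)
    exact ⟨ξ, hξ, fun ζ hζ => hmax hζ⟩
  choose ξm hξmΞ hξmmax using hK
  obtain ⟨σ, hσdef⟩ : ∃ σ : ℝ → Fin N → ℝ,
      σ = fun α s => q (ξm α s) - α * ‖ξhat s - ξm α s‖ := ⟨_, rfl⟩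
  have hσ_ub : ∀ (α : ℝ) (s : Fin N), ∀ ζ ∈ Ξ, q ζ - α * ‖ξhat s - ζ‖ ≤ σ α s := by
    intro α s ζ hζ; rw [hσdef]; exact hξmmax α s ζ hζ
  have hσ_lb : ∀ (α : ℝ) (s : Fin N), q (ξhat s) ≤ σ α s := by
    intro α s
    have := hσ_ub α s (ξhat s) (hmem s)
    simpa using this
  have hσ_feas : ∀ (α : ℝ) (s : Fin N), ∀ ζ ∈ Ξ, q ζ ≤ α * ‖ξhat s - ζ‖ + σ α s := by
    intro α s ζ hζ
    have := hσ_ub α s ζ hζ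
    linarith
  obtain ⟨ψ, hψdef⟩ : ∃ ψ : ℝ → ℝ, ψ = fun α => ε * α + ∑ s, phat s * σ α s := ⟨_, rfl⟩
  rcases hε.eq_or_lt with hε0 | hεpos
  · -- case ε = 0
    refine ⟨Set.range ξhat, Set.range_subset_iff.mpr hmem, Set.finite_range _,
      ∑ s, phat s * q (ξhat s), ?_, ?_⟩
    · intro α β hα hfeas
      have hβ : ∀ s, q (ξhat s) ≤ β s := by
        intro s
        have := hfeas s (ξhat s) (Set.mem_range_self s)
        simpa using this
      have hsum : ∑ s, phat s * q (ξhat s) ≤ ∑ s, phat s * β s :=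
        Finset.sum_le_sum fun s _ => mul_le_mul_of_nonneg_left (hβ s) (hp0 s)
      rw [← hε0]
      linarith
    · intro η hη
      -- upper bound for q on Ξ
      obtain ⟨ξ₀, _, hM⟩ := hcomp.exists_isMaxOn hne hq.continuousOn
      set M := q ξ₀ with hMdef
      have hMub : ∀ ζ ∈ Ξ, q ζ ≤ M := fun ζ hζ => hM hζ
      -- continuity of q at each ξhat s
      have hδ : ∀ s : Fin N, ∃ δ : ℝ, 0 < δ ∧ ∀ ζ : E, dist ζ (ξhat s) < δ →
          q ζ ≤ q (ξhat s) + η := by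
        intro s
        obtain ⟨δ, hδpos, hδ⟩ := Metric.continuousAt_iff.mp (hq.continuousAt (x := ξhat s)) η hη
        refine ⟨δ, hδpos, fun ζ hζ => ?_⟩
        have := hδ hζ
        rw [Real.dist_eq] at this
        have := abs_lt.mp this
        linarith [this.2]
      choose δ hδpos hδq using hδ
      refine ⟨∑ s, max 0 ((M - q (ξhat s)) / δ s), fun s => q (ξhat s) + η, ?_, ?_, ?_⟩
      · exact Finset.sum_nonneg fun s _ => le_max_left _ _
      · intro s ζ hζ
        dsimp only
        set α := ∑ t, max 0 ((M - q (ξhat t)) / δ t) with hαdef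
        have hα0 : 0 ≤ α := Finset.sum_nonneg fun t _ => le_max_left _ _
        have hαs : (M - q (ξhat s)) / δ s ≤ α := by
          refine le_trans (le_max_right 0 _) ?_
          exact Finset.single_le_sum (f := fun t => max 0 ((M - q (ξhat t)) / δ t))
            (fun t _ => le_max_left _ _) (Finset.mem_univ s)
        by_cases hcase : dist ζ (ξhat s) < δ s
        · have h1 := hδq s ζ hcase
          have h2 : 0 ≤ α * ‖ξhat s - ζ‖ := mul_nonneg hα0 (norm_nonneg _)
          linarith
        · push_neg at hcase
          have hnorm : ‖ξhat s - ζ‖ = dist ζ (ξhat s) := by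
            rw [dist_eq_norm, norm_sub_rev]
          have h1 : α * δ s ≤ α * ‖ξhat s - ζ‖ := by
            rw [hnorm]; exact mul_le_mul_of_nonneg_left hcase hα0
          have h2 : M - q (ξhat s) ≤ α * δ s := by
            rw [div_le_iff₀ (hδpos s)] at hαs
            linarith
          have h3 := hMub ζ hζ
          linarith
      · rw [← hε0]
        have : ∑ s, phat s * (q (ξhat s) + η) = (∑ s, phat s * q (ξhat s)) + η := by
          rw [Finset.sum_congr rfl (fun s _ => by ring : ∀ s ∈ Finset.univ,
            phat s * (q (ξhat s) + η) = phat s * q (ξhat s) + phat s * η),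
            Finset.sum_add_distrib, ← Finset.sum_mul, hp1, one_mul]
        rw [this]
        simp
  · -- case 0 < ε
    obtain ⟨C, hC⟩ := Metric.isBounded_iff.mp hcomp.isBounded
    have hD0 : (0:ℝ) ≤ max C 0 := le_max_right _ _
    set D := max C 0 with hDdef
    have hDb : ∀ (s : Fin N), ∀ ζ ∈ Ξ, ‖ξhat s - ζ‖ ≤ D := by
      intro s ζ hζ
      have := hC (hmem s) hζ
      rw [dist_eq_norm] at this
      exact le_trans this (le_max_left _ _)
    have hσlip1 : ∀ (α α' : ℝ) (s : Fin N),
        σ α s - σ α' s ≤ (α' - α) * ‖ξhat s - ξm α s‖ := by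
      intro α α' s
      have h1 : q (ξm α s) - α' * ‖ξhat s - ξm α s‖ ≤ σ α' s := hσ_ub α' s _ (hξmΞ α s)
      rw [hσdef] at h1 ⊢
      dsimp only at h1 ⊢
      nlinarith [h1]
    have hσcont : ∀ s : Fin N, Continuous (fun α => σ α s) := by
      intro s
      have : LipschitzWith (Real.toNNReal D) (fun α => σ α s) := by
        apply LipschitzWith.of_dist_le_mul
        intro a b
        rw [Real.dist_eq, Real.dist_eq]
        have h1 := hσlip1 a b s
        have h2 := hσlip1 b a s
        have hna : ‖ξhat s - ξm a s‖ ≤ D := hDb s _ (hξmΞ a s)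
        have hnb : ‖ξhat s - ξm b s‖ ≤ D := hDb s _ (hξmΞ b s)
        have hcoe : ((Real.toNNReal D : NNReal) : ℝ) = D := Real.coe_toNNReal D hD0
        rw [hcoe, abs_sub_le_iff]
        constructor
        · calc σ a s - σ b s ≤ (b - a) * ‖ξhat s - ξm a s‖ := h1
            _ ≤ |b - a| * ‖ξhat s - ξm a s‖ :=
              mul_le_mul_of_nonneg_right (le_abs_self _) (norm_nonneg _)
            _ ≤ |b - a| * D := mul_le_mul_of_nonneg_left hna (abs_nonneg _)
            _ = D * |a - b| := by rw [abs_sub_comm]; ring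
        · calc σ b s - σ a s ≤ (a - b) * ‖ξhat s - ξm b s‖ := h2
            _ ≤ |a - b| * ‖ξhat s - ξm b s‖ :=
              mul_le_mul_of_nonneg_right (le_abs_self _) (norm_nonneg _)
            _ ≤ |a - b| * D := mul_le_mul_of_nonneg_left hnb (abs_nonneg _)
            _ = D * |a - b| := by ring
      exact this.continuous
    have hψcont : Continuous ψ := by
      rw [hψdef]
      exact (continuous_const.mul continuous_id).add
        (continuous_finset_sum _ fun s _ => continuous_const.mul (hσcont s))
    have hψlb : ∀ α : ℝ, ε * α + ∑ s, phat s * q (ξhat s) ≤ ψ α := by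
      intro α
      rw [hψdef]
      dsimp only
      have : ∑ s, phat s * q (ξhat s) ≤ ∑ s, phat s * σ α s :=
        Finset.sum_le_sum fun s _ => mul_le_mul_of_nonneg_left (hσ_lb α s) (hp0 s)
      linarith
    obtain ⟨R, hR0, hRbig⟩ : ∃ R : ℝ, 0 ≤ R ∧
        ψ 0 - (∑ s, phat s * q (ξhat s)) ≤ ε * R := by
      refine ⟨max 0 ((ψ 0 - ∑ s, phat s * q (ξhat s)) / ε), le_max_left _ _, ?_⟩
      have h1 : (ψ 0 - ∑ s, phat s * q (ξhat s)) / ε ≤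
          max 0 ((ψ 0 - ∑ s, phat s * q (ξhat s)) / ε) := le_max_right _ _
      calc ψ 0 - ∑ s, phat s * q (ξhat s)
          = ε * ((ψ 0 - ∑ s, phat s * q (ξhat s)) / ε) := by field_simp
        _ ≤ ε * max 0 ((ψ 0 - ∑ s, phat s * q (ξhat s)) / ε) :=
            mul_le_mul_of_nonneg_left h1 hε
    obtain ⟨αst, hαstmem, hαstmin⟩ :=
      isCompact_Icc.exists_isMinOn (Set.nonempty_Icc.mpr hR0) hψcont.continuousOn
    have hglob : ∀ α : ℝ, 0 ≤ α → ψ αst ≤ ψ α := by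
      intro α hα
      by_cases hcase : α ≤ R
      · exact hαstmin ⟨hα, hcase⟩
      · push_neg at hcase
        have h2 := hψlb α
        have h3 : ψ αst ≤ ψ 0 := hαstmin ⟨le_refl 0, hR0⟩
        have h4 : ε * R ≤ ε * α := mul_le_mul_of_nonneg_left hcase.le hε
        linarith
    have hII : ∀ η : ℝ, 0 < η → ∃ α : ℝ, ∃ β : Fin N → ℝ, 0 ≤ α ∧
        (∀ s, ∀ ξ ∈ Ξ, q ξ ≤ α * ‖ξhat s - ξ‖ + β s) ∧
        ε * α + ∑ s, phat s * β s ≤ ψ αst + η := by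
      intro η hη
      refine ⟨αst, fun s => σ αst s, hαstmem.1,
        fun s ζ hζ => hσ_feas αst s ζ hζ, ?_⟩
      rw [hψdef]
      dsimp only
      linarith
    -- generic subsequence extraction
    have aux : ∀ t : ℕ → ℝ, Tendsto t atTop (𝓝 αst) →
        ∃ w : Fin N → E, (∀ s, w s ∈ Ξ) ∧
          (∀ s, σ αst s ≤ q (w s) - αst * ‖ξhat s - w s‖) ∧
          ∃ φ : ℕ → ℕ, StrictMono φ ∧
            Tendsto (fun k => ∑ s, phat s * ‖ξhat s - ξm (t (φ k)) s‖) atTop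
              (𝓝 (∑ s, phat s * ‖ξhat s - w s‖)) := by
      intro t ht
      have hx : ∀ k : ℕ, (fun s => ξm (t k) s) ∈ Set.univ.pi (fun _ : Fin N => Ξ) :=
        fun k => Set.mem_univ_pi.mpr fun s => hξmΞ (t k) s
      obtain ⟨w, hwPi, φ, hφ, hconv⟩ :=
        (isCompact_univ_pi fun _ : Fin N => hcomp).tendsto_subseq hx
      have hw : ∀ s, w s ∈ Ξ := fun s => hwPi s (Set.mem_univ s)
      have hconvs : ∀ s, Tendsto (fun k => ξm (t (φ k)) s) atTop (𝓝 (w s)) :=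
        fun s => (tendsto_pi_nhds.mp hconv) s
      have htφ : Tendsto (fun k => t (φ k)) atTop (𝓝 αst) := ht.comp hφ.tendsto_atTop
      refine ⟨w, hw, ?_, φ, hφ, ?_⟩
      · intro s
        have hle : ∀ k, q (ξm αst s) - t (φ k) * ‖ξhat s - ξm αst s‖ ≤
            q (ξm (t (φ k)) s) - t (φ k) * ‖ξhat s - ξm (t (φ k)) s‖ := by
          intro k
          have h := hσ_ub (t (φ k)) s (ξm αst s) (hξmΞ αst s)
          rw [hσdef] at h
          exact h
        have hL : Tendsto (fun k => q (ξm αst s) - t (φ k) * ‖ξhat s - ξm αst s‖) atTop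
            (𝓝 (q (ξm αst s) - αst * ‖ξhat s - ξm αst s‖)) :=
          tendsto_const_nhds.sub (htφ.mul tendsto_const_nhds)
        have hnorm : Tendsto (fun k => ‖ξhat s - ξm (t (φ k)) s‖) atTop
            (𝓝 ‖ξhat s - w s‖) := (tendsto_const_nhds.sub (hconvs s)).norm
        have hq' : Tendsto (fun k => q (ξm (t (φ k)) s)) atTop (𝓝 (q (w s))) :=
          (hq.tendsto (w s)).comp (hconvs s)
        have hR' : Tendsto
            (fun k => q (ξm (t (φ k)) s) - t (φ k) * ‖ξhat s - ξm (t (φ k)) s‖)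
            atTop (𝓝 (q (w s) - αst * ‖ξhat s - w s‖)) := hq'.sub (htφ.mul hnorm)
        have hfin := le_of_tendsto_of_tendsto' hL hR' hle
        rw [hσdef]
        exact hfin
      · refine tendsto_finset_sum _ fun s _ => ?_
        exact ((tendsto_const_nhds.sub (hconvs s)).norm).const_mul _
    -- key per-point inequality
    have hkey : ∀ γ : ℝ, 0 ≤ γ →
        0 ≤ (γ - αst) * (ε - ∑ s, phat s * ‖ξhat s - ξm γ s‖) := by
      intro γ hγ
      have h1 : ψ αst ≤ ψ γ := hglob γ hγ
      have h2 : ∀ s, σ γ s ≤ σ αst s - (γ - αst) * ‖ξhat s - ξm γ s‖ := by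
        intro s
        have h := hσ_ub αst s (ξm γ s) (hξmΞ γ s)
        rw [hσdef] at h ⊢
        dsimp only at h ⊢
        nlinarith [h]
      have h3 : ∑ s, phat s * σ γ s ≤
          ∑ s, phat s * (σ αst s - (γ - αst) * ‖ξhat s - ξm γ s‖) :=
        Finset.sum_le_sum fun s _ => mul_le_mul_of_nonneg_left (h2 s) (hp0 s)
      have h4 : ∑ s, phat s * (σ αst s - (γ - αst) * ‖ξhat s - ξm γ s‖) =
          (∑ s, phat s * σ αst s) - (γ - αst) * ∑ s, phat s * ‖ξhat s - ξm γ s‖ := by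
        rw [Finset.mul_sum, ← Finset.sum_sub_distrib]
        exact Finset.sum_congr rfl fun s _ => by ring
      rw [hψdef] at h1
      dsimp only at h1
      nlinarith [h1, h3, h4]
    -- right branch: limit of maximizers from above
    have hbt : Tendsto (fun k : ℕ => αst + 1 / (k + 1 : ℝ)) atTop (𝓝 αst) := by
      have h0 : Tendsto (fun k : ℕ => 1 / ((k : ℝ) + 1)) atTop (𝓝 0) :=
        tendsto_one_div_add_atTop_nhds_zero_nat
      simpa using tendsto_const_nhds.add h0
    obtain ⟨u, hu, humax, φ, hφ, hTconv⟩ := aux (fun k => αst + 1 / (k + 1 : ℝ)) hbt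
    have hTu : ∑ s, phat s * ‖ξhat s - u s‖ ≤ ε := by
      apply le_of_tendsto hTconv
      apply Filter.Eventually.of_forall
      intro k
      have hγ0 : (0:ℝ) ≤ αst + 1 / (φ k + 1 : ℝ) :=
        add_nonneg hαstmem.1 (by positivity)
      have hk := hkey (αst + 1 / (φ k + 1 : ℝ)) hγ0
      have hpos : (0:ℝ) < (αst + 1 / (φ k + 1 : ℝ)) - αst := by
        have : (0:ℝ) < 1 / (φ k + 1 : ℝ) := by positivity
        linarith
      by_contra h
      push_neg at h
      nlinarith [mul_pos hpos (sub_pos.mpr h)]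
    have hRight : ∀ α : ℝ, ∀ β : Fin N → ℝ, αst ≤ α →
        (∀ s, q (u s) ≤ α * ‖ξhat s - u s‖ + β s) →
        ψ αst ≤ ε * α + ∑ s, phat s * β s := by
      intro α β hα hfeas
      have h2 : ∑ s, phat s * (q (u s) - α * ‖ξhat s - u s‖) ≤ ∑ s, phat s * β s :=
        Finset.sum_le_sum fun s _ =>
          mul_le_mul_of_nonneg_left (by linarith [hfeas s]) (hp0 s)
      have h3 : ∑ s, phat s * (q (u s) - α * ‖ξhat s - u s‖) =
          (∑ s, phat s * q (u s)) - α * ∑ s, phat s * ‖ξhat s - u s‖ := by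
        rw [Finset.mul_sum, ← Finset.sum_sub_distrib]
        exact Finset.sum_congr rfl fun s _ => by ring
      have h5 : ∑ s, phat s * σ αst s ≤
          ∑ s, phat s * (q (u s) - αst * ‖ξhat s - u s‖) :=
        Finset.sum_le_sum fun s _ => mul_le_mul_of_nonneg_left (humax s) (hp0 s)
      have h6 : ∑ s, phat s * (q (u s) - αst * ‖ξhat s - u s‖) =
          (∑ s, phat s * q (u s)) - αst * ∑ s, phat s * ‖ξhat s - u s‖ := by
        rw [Finset.mul_sum, ← Finset.sum_sub_distrib]
        exact Finset.sum_congr rfl fun s _ => by ring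
      rw [hψdef]
      dsimp only
      nlinarith [h2, h3, h5, h6, hTu,
        mul_nonneg (sub_nonneg.mpr hα)
          (sub_nonneg.mpr hTu)]
    rcases eq_or_lt_of_le hαstmem.1 with hα0 | hαpos
    · -- αst = 0 : only the right branch is needed
      refine ⟨Set.range u, Set.range_subset_iff.mpr hu, Set.finite_range _,
        ψ αst, ?_, hII⟩
      intro α β hα hfeas
      exact hRight α β (by linarith) fun s => hfeas s (u s) (Set.mem_range_self s)
    · -- 0 < αst : also need the left branch
      have hat : Tendsto (fun k : ℕ => αst - αst * (1 / (k + 1 : ℝ))) atTop (𝓝 αst) := by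
        have h0 : Tendsto (fun k : ℕ => 1 / ((k : ℝ) + 1)) atTop (𝓝 0) :=
          tendsto_one_div_add_atTop_nhds_zero_nat
        have h1 : Tendsto (fun k : ℕ => αst - αst * (1 / ((k : ℝ) + 1))) atTop
            (𝓝 (αst - αst * 0)) := tendsto_const_nhds.sub (h0.const_mul αst)
        simpa using h1
      obtain ⟨v, hv, hvmax, φ', hφ', hTconv'⟩ :=
        aux (fun k => αst - αst * (1 / (k + 1 : ℝ))) hat
      have hTv : ε ≤ ∑ s, phat s * ‖ξhat s - v s‖ := by
        apply ge_of_tendsto hTconv'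
        apply Filter.Eventually.of_forall
        intro k
        have hfrac : (0:ℝ) < 1 / (φ' k + 1 : ℝ) := by positivity
        have hfrac1 : (1:ℝ) / (φ' k + 1 : ℝ) ≤ 1 := by
          rw [div_le_one (by positivity)]
          have : (0:ℝ) ≤ (φ' k : ℝ) := Nat.cast_nonneg _
          linarith
        have hγ0 : (0:ℝ) ≤ αst - αst * (1 / (φ' k + 1 : ℝ)) := by nlinarith
        have hγlt : αst - αst * (1 / (φ' k + 1 : ℝ)) - αst < 0 := by nlinarith
        have hk := hkey (αst - αst * (1 / (φ' k + 1 : ℝ))) hγ0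
        by_contra h
        push_neg at h
        nlinarith [mul_pos (neg_pos.mpr hγlt) (sub_pos.mpr h)]
      have hLeft : ∀ α : ℝ, ∀ β : Fin N → ℝ, 0 ≤ α → α ≤ αst →
          (∀ s, q (v s) ≤ α * ‖ξhat s - v s‖ + β s) →
          ψ αst ≤ ε * α + ∑ s, phat s * β s := by
        intro α β hα0' hα hfeas
        have h2 : ∑ s, phat s * (q (v s) - α * ‖ξhat s - v s‖) ≤ ∑ s, phat s * β s :=
          Finset.sum_le_sum fun s _ =>
            mul_le_mul_of_nonneg_left (by linarith [hfeas s]) (hp0 s)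
        have h3 : ∑ s, phat s * (q (v s) - α * ‖ξhat s - v s‖) =
            (∑ s, phat s * q (v s)) - α * ∑ s, phat s * ‖ξhat s - v s‖ := by
          rw [Finset.mul_sum, ← Finset.sum_sub_distrib]
          exact Finset.sum_congr rfl fun s _ => by ring
        have h5 : ∑ s, phat s * σ αst s ≤
            ∑ s, phat s * (q (v s) - αst * ‖ξhat s - v s‖) :=
          Finset.sum_le_sum fun s _ => mul_le_mul_of_nonneg_left (hvmax s) (hp0 s)
        have h6 : ∑ s, phat s * (q (v s) - αst * ‖ξhat s - v s‖) =
            (∑ s, phat s * q (v s)) - αst * ∑ s, phat s * ‖ξhat s - v s‖ := by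
          rw [Finset.mul_sum, ← Finset.sum_sub_distrib]
          exact Finset.sum_congr rfl fun s _ => by ring
        rw [hψdef]
        dsimp only
        nlinarith [h2, h3, h5, h6, hTv,
          mul_nonneg (sub_nonneg.mpr hα) (sub_nonneg.mpr hTv)]
      refine ⟨Set.range u ∪ Set.range v,
        Set.union_subset (Set.range_subset_iff.mpr hu) (Set.range_subset_iff.mpr hv),
        (Set.finite_range u).union (Set.finite_range v), ψ αst, ?_, hII⟩
      intro α β hα hfeas
      rcases le_total αst α with hc | hc
      · exact hRight α β hc fun s =>
          hfeas s (u s) (Set.mem_union_left _ (Set.mem_range_self s))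
      · exact hLeft α β hα hc fun s =>
          hfeas s (v s) (Set.mem_union_right _ (Set.mem_range_self s))



/-- The optimal value (in the extended reals) of the two-stage deterministic
equivalent with dual constraints indexed by the subset `S` of the support:
`V(S) = min_{x ∈ X} inf { g(x) + ε·α + Σ_s p̂_s β_s : (α, β) feasible for S }`. -/
noncomputable def twoStageValue {E : Type*} [NormedAddCommGroup E] [NormedSpace ℝ E]
    {N : ℕ} {X : Type*} (ξhat : Fin N → E) (phat : Fin N → ℝ) (ε : ℝ)
    (g : X → ℝ) (Q : X → E → ℝ) (S : Set E) : EReal :=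
  ⨅ x : X, sInf { w : EReal | ∃ α : ℝ, ∃ β : Fin N → ℝ, 0 ≤ α ∧
    (∀ s, ∀ ξ ∈ S, Q x ξ ≤ α * ‖ξhat s - ξ‖ + β s) ∧
    w = ((g x + ε * α + ∑ s, phat s * β s : ℝ) : EReal) }

/-- Proposition 3: finite reducibility of the two-stage deterministic equivalent:
there is a finite subset `Ξₖ ⊆ Ξ` with `V(Ξₖ) = V(Ξ)`. -/
theorem two_stage_finitely_reducible
    {E : Type*} [NormedAddCommGroup E] [NormedSpace ℝ E]
    {N : ℕ} (hN : 1 ≤ N)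
    (Ξ : Set E) (hne : Ξ.Nonempty) (hcomp : IsCompact Ξ)
    (ξhat : Fin N → E) (hmem : ∀ s, ξhat s ∈ Ξ)
    (phat : Fin N → ℝ) (hp0 : ∀ s, 0 ≤ phat s) (hp1 : ∑ s, phat s = 1)
    (ε : ℝ) (hε : 0 ≤ ε)
    (X : Type*) [Fintype X] [Nonempty X]
    (g : X → ℝ) (Q : X → E → ℝ) (hQ : ∀ x, Continuous fun ξ => Q x ξ) :
    ∃ Ξk : Set E, Ξk ⊆ Ξ ∧ Ξk.Finite ∧
      twoStageValue ξhat phat ε g Q Ξk = twoStageValue ξhat phat ε g Q Ξ := by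
  classical
  have main : ∀ x : X, ∃ F : Set E, F ⊆ Ξ ∧ F.Finite ∧
      sInf { w : EReal | ∃ α : ℝ, ∃ β : Fin N → ℝ, 0 ≤ α ∧
        (∀ s, ∀ ξ ∈ F, Q x ξ ≤ α * ‖ξhat s - ξ‖ + β s) ∧
        w = ((g x + ε * α + ∑ s, phat s * β s : ℝ) : EReal) } =
      sInf { w : EReal | ∃ α : ℝ, ∃ β : Fin N → ℝ, 0 ≤ α ∧
        (∀ s, ∀ ξ ∈ Ξ, Q x ξ ≤ α * ‖ξhat s - ξ‖ + β s) ∧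
        w = ((g x + ε * α + ∑ s, phat s * β s : ℝ) : EReal) } := by
    intro x
    obtain ⟨F, hFsub, hFfin, c, hI, hII⟩ :=
      exists_finite_reduction Ξ hne hcomp ξhat hmem phat hp0 hp1 ε hε (Q x) (hQ x)
    refine ⟨F, hFsub, hFfin, le_antisymm ?_ ?_⟩
    · apply sInf_le_sInf
      rintro w ⟨α, β, hα, hfeas, rfl⟩
      exact ⟨α, β, hα, fun s ξ hξ => hfeas s ξ (hFsub hξ), rfl⟩
    · apply le_sInf
      rintro w ⟨α, β, hα, hfeas, rfl⟩
      have h1 : (((g x + c : ℝ)) : EReal) ≤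
          ((g x + ε * α + ∑ s, phat s * β s : ℝ) : EReal) := by
        rw [EReal.coe_le_coe_iff]
        have := hI α β hα hfeas
        linarith
      refine le_trans ?_ h1
      apply ereal_le_coe_of_forall
      intro η hη
      obtain ⟨α', β', hα', hfeas', hval⟩ := hII η hη
      have hmem' : ((g x + ε * α' + ∑ s, phat s * β' s : ℝ) : EReal) ∈
          { w : EReal | ∃ α : ℝ, ∃ β : Fin N → ℝ, 0 ≤ α ∧
            (∀ s, ∀ ξ ∈ Ξ, Q x ξ ≤ α * ‖ξhat s - ξ‖ + β s) ∧
            w = ((g x + ε * α + ∑ s, phat s * β s : ℝ) : EReal) } :=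
        ⟨α', β', hα', hfeas', rfl⟩
      refine le_trans (sInf_le hmem') ?_
      rw [EReal.coe_le_coe_iff]
      linarith
  choose F hFsub hFfin hFeq using main
  refine ⟨⋃ x, F x, Set.iUnion_subset hFsub, Set.finite_iUnion hFfin, ?_⟩
  unfold twoStageValue
  apply iInf_congr
  intro x
  apply le_antisymm
  · apply sInf_le_sInf
    rintro w ⟨α, β, hα, hfeas, rfl⟩
    exact ⟨α, β, hα, fun s ξ hξ => hfeas s ξ ((Set.iUnion_subset hFsub) hξ), rfl⟩
  · rw [← hFeq x]
    apply sInf_le_sInf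
    rintro w ⟨α, β, hα, hfeas, rfl⟩
    exact ⟨α, β, hα, fun s ξ hξ => hfeas s ξ (Set.subset_iUnion F x hξ), rfl⟩
end
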